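/- arXiv:2206.14959 — 5 statements merged into one kernel-verified Lean document; each statement's English description precedes it below -/
import Mathlib

section
/- The commutator subgroup of SL₂(ℤ₃) is an open subgroup of index 3, and it contains every matrix in SL₂(ℤ₃) that is congruent to the identity modulo 3. -/
open Matrix
open scoped commutatorElement

namespace SL2Z3Aux

abbrev R := ℤ_[3]

noncomputable def E12 (x : R) : GL (Fin 2) R :=
  ⟨!![1, x; 0, 1], !![1, -x; 0, 1],
   by simp [Matrix.mul_fin_two, Matrix.one_fin_two],
   by simp [Matrix.mul_fin_two, Matrix.one_fin_two]⟩

noncomputable def E21 (x : R) : GL (Fin 2) R :=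
  ⟨!![1, 0; x, 1], !![1, 0; -x, 1],
   by simp [Matrix.mul_fin_two, Matrix.one_fin_two],
   by simp [Matrix.mul_fin_two, Matrix.one_fin_two]⟩

noncomputable def Dm (u : Rˣ) : GL (Fin 2) R :=
  ⟨!![(u : R), 0; 0, ((u⁻¹ : Rˣ) : R)], !![((u⁻¹ : Rˣ) : R), 0; 0, (u : R)],
   by simp [Matrix.mul_fin_two, Matrix.one_fin_two],
   by simp [Matrix.mul_fin_two, Matrix.one_fin_two]⟩

noncomputable def W : GL (Fin 2) R :=
  ⟨!![0, 1; -1, 0], !![0, -1; 1, 0],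
   by simp [Matrix.mul_fin_two, Matrix.one_fin_two],
   by simp [Matrix.mul_fin_two, Matrix.one_fin_two]⟩

@[simp] lemma val_E12 (x : R) : (E12 x : Matrix (Fin 2) (Fin 2) R) = !![1, x; 0, 1] := rfl
@[simp] lemma val_E12_inv (x : R) : ((E12 x)⁻¹ : GL (Fin 2) R).val = !![1, -x; 0, 1] := rfl
@[simp] lemma val_E21 (x : R) : (E21 x : Matrix (Fin 2) (Fin 2) R) = !![1, 0; x, 1] := rfl
@[simp] lemma val_E21_inv (x : R) : ((E21 x)⁻¹ : GL (Fin 2) R).val = !![1, 0; -x, 1] := rfl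
@[simp] lemma val_Dm (u : Rˣ) :
    (Dm u : Matrix (Fin 2) (Fin 2) R) = !![(u : R), 0; 0, ((u⁻¹ : Rˣ) : R)] := rfl
@[simp] lemma val_Dm_inv (u : Rˣ) :
    ((Dm u)⁻¹ : GL (Fin 2) R).val = !![((u⁻¹ : Rˣ) : R), 0; 0, (u : R)] := rfl
@[simp] lemma val_W : (W : Matrix (Fin 2) (Fin 2) R) = !![0, 1; -1, 0] := rfl
@[simp] lemma val_W_inv : ((W)⁻¹ : GL (Fin 2) R).val = !![0, -1; 1, 0] := rfl

lemma E12_mul (x y : R) : E12 x * E12 y = E12 (x + y) := by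
  apply Units.ext
  simp [Units.val_mul, Matrix.mul_fin_two]
  ring_nf

lemma E21_mul (x y : R) : E21 x * E21 y = E21 (x + y) := by
  apply Units.ext
  simp [Units.val_mul, Matrix.mul_fin_two]

lemma E12_zero : E12 0 = 1 := Units.ext (by simp [Matrix.one_fin_two])

lemma E21_zero : E21 0 = 1 := Units.ext (by simp [Matrix.one_fin_two])

lemma Dm_one : Dm 1 = 1 := Units.ext (by simp [Matrix.one_fin_two])

lemma E12_inv (x : R) : (E12 x)⁻¹ = E12 (-x) :=
  inv_eq_of_mul_eq_one_right (by rw [E12_mul, add_neg_cancel, E12_zero])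

lemma E21_inv (x : R) : (E21 x)⁻¹ = E21 (-x) :=
  inv_eq_of_mul_eq_one_right (by rw [E21_mul, add_neg_cancel, E21_zero])

lemma Dm_mul (u v : Rˣ) : Dm u * Dm v = Dm (u * v) := by
  apply Units.ext
  simp [Units.val_mul, Matrix.mul_fin_two, mul_comm]

lemma Dm_inv (u : Rˣ) : (Dm u)⁻¹ = Dm u⁻¹ :=
  inv_eq_of_mul_eq_one_right (by rw [Dm_mul, mul_inv_cancel, Dm_one])

lemma conj_E12 (u : Rˣ) (x : R) : Dm u * E12 x * (Dm u)⁻¹ = E12 ((u : R) * u * x) := by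
  apply Units.ext
  simp only [Units.val_mul, val_Dm, val_E12, val_Dm_inv, Matrix.mul_fin_two]
  ext i j
  fin_cases i <;> fin_cases j <;>
    simp <;>
    first
      | ring
      | linear_combination u.mul_inv
      | linear_combination u.inv_mul
      | linear_combination ((u : R) * u * x) * u.mul_inv

lemma conj_E21 (u : Rˣ) (x : R) :
    Dm u * E21 x * (Dm u)⁻¹ = E21 (((u⁻¹ : Rˣ) : R) * ((u⁻¹ : Rˣ) : R) * x) := by
  apply Units.ext
  simp only [Units.val_mul, val_Dm, val_E21, val_Dm_inv, Matrix.mul_fin_two]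
  ext i j
  fin_cases i <;> fin_cases j <;>
    simp <;>
    first
      | ring
      | linear_combination u.mul_inv
      | linear_combination u.inv_mul
      | linear_combination (((u⁻¹ : Rˣ) : R) * ((u⁻¹ : Rˣ) : R) * x) * u.inv_mul

lemma comm_E12 (u : Rˣ) (x : R) : ⁅Dm u, E12 x⁆ = E12 ((u : R) * u * x - x) := by
  rw [commutatorElement_def, mul_assoc (Dm u * E12 x)]
  rw [show (Dm u * E12 x * ((Dm u)⁻¹ * (E12 x)⁻¹)) =
    (Dm u * E12 x * (Dm u)⁻¹) * (E12 x)⁻¹ by group]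
  rw [conj_E12, E12_inv, E12_mul]
  ring_nf

lemma comm_E21 (u : Rˣ) (x : R) :
    ⁅Dm u, E21 x⁆ = E21 (((u⁻¹ : Rˣ) : R) * ((u⁻¹ : Rˣ) : R) * x - x) := by
  rw [commutatorElement_def]
  rw [show (Dm u * E21 x * (Dm u)⁻¹ * (E21 x)⁻¹) =
    (Dm u * E21 x * (Dm u)⁻¹) * (E21 x)⁻¹ by group]
  rw [conj_E21, E21_inv, E21_mul]
  ring_nf

lemma conj_W_Dm (u : Rˣ) : W * Dm u * W⁻¹ = Dm u⁻¹ := by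
  apply Units.ext
  simp only [Units.val_mul, val_W, val_Dm, val_W_inv, Matrix.mul_fin_two]
  ext i j
  fin_cases i <;> fin_cases j <;> simp

lemma comm_W_Dm (u : Rˣ) : ⁅W, Dm u⁆ = Dm (u⁻¹ * u⁻¹) := by
  rw [commutatorElement_def]
  rw [show (W * Dm u * W⁻¹ * (Dm u)⁻¹) = (W * Dm u * W⁻¹) * (Dm u)⁻¹ by group]
  rw [conj_W_Dm, Dm_inv, Dm_mul]


end SL2Z3Aux

/-- The subgroup `SL₂(ℤ₃)` of `GL₂(ℤ₃)`, realized as the kernel of the determinant. -/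
noncomputable def SL2Z3 : Subgroup (GL (Fin 2) ℤ_[3]) :=
  (Matrix.GeneralLinearGroup.det : GL (Fin 2) ℤ_[3] →* ℤ_[3]ˣ).ker

/-- The closed (topological) commutator subgroup of `SL₂(ℤ₃)`. -/
noncomputable def commSL2Z3 : Subgroup (GL (Fin 2) ℤ_[3]) :=
  (⁅SL2Z3, SL2Z3⁆ : Subgroup (GL (Fin 2) ℤ_[3])).topologicalClosure

namespace SL2Z3Aux

lemma mem_SL {A : GL (Fin 2) R} (h : Matrix.det (A : Matrix (Fin 2) (Fin 2) R) = 1) :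
    A ∈ SL2Z3 := by
  rw [SL2Z3, MonoidHom.mem_ker]
  apply Units.ext
  simpa using h

lemma det_of_mem {A : GL (Fin 2) R} (h : A ∈ SL2Z3) :
    Matrix.det (A : Matrix (Fin 2) (Fin 2) R) = 1 := by
  rw [SL2Z3, MonoidHom.mem_ker] at h
  have := congrArg Units.val h
  simpa using this

lemma E12_mem (x : R) : E12 x ∈ SL2Z3 := mem_SL (by simp [Matrix.det_fin_two_of])
lemma E21_mem (x : R) : E21 x ∈ SL2Z3 := mem_SL (by simp [Matrix.det_fin_two_of])
lemma Dm_mem (u : Rˣ) : Dm u ∈ SL2Z3 := mem_SL (by simp [Matrix.det_fin_two_of])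
lemma W_mem : W ∈ SL2Z3 := mem_SL (by simp [Matrix.det_fin_two_of])

lemma norm_lt_one (x : R) (hx : PadicInt.toZMod x = 0) : ‖x‖ < 1 := by
  have : x ∈ RingHom.ker (PadicInt.toZMod : R →+* ZMod 3) := hx
  rw [PadicInt.ker_toZMod, IsLocalRing.mem_maximalIdeal, PadicInt.mem_nonunits] at this
  exact this

lemma exists_three_mul (x : R) (hx : PadicInt.toZMod x = 0) : ∃ y : R, x = 3 * y := by
  obtain ⟨y, hy⟩ := (PadicInt.norm_lt_one_iff_dvd x).mp (norm_lt_one x hx)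
  exact ⟨y, by exact_mod_cast hy⟩

lemma isUnit_of_toZMod_ne (x : R) (hx : PadicInt.toZMod x ≠ 0) : IsUnit x := by
  rw [PadicInt.isUnit_iff]
  rcases lt_or_eq_of_le (PadicInt.norm_le_one x) with h | h
  · exact absurd (show x ∈ RingHom.ker (PadicInt.toZMod : R →+* ZMod 3) by
      rw [PadicInt.ker_toZMod, IsLocalRing.mem_maximalIdeal, PadicInt.mem_nonunits]; exact h) hx
  · exact h

lemma isUnit_two : IsUnit (2 : R) := by
  apply isUnit_of_toZMod_ne
  rw [show (2:R) = ((2:ℕ):R) by norm_num, map_natCast]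
  decide

lemma exists_sqrt (a : R) (ha : PadicInt.toZMod a = 1) : ∃ z : R, z ^ 2 = a := by
  have h2 : ‖Polynomial.eval 1 (Polynomial.derivative (Polynomial.X ^ 2 - Polynomial.C a))‖
      = ‖(2 : R)‖ := by simp [one_add_one_eq_two]
  have h2' : ‖(2 : R)‖ = 1 := PadicInt.isUnit_iff.mp isUnit_two
  have hlt : ‖Polynomial.eval 1 (Polynomial.X ^ 2 - Polynomial.C a)‖ <
      ‖Polynomial.eval 1 (Polynomial.derivative (Polynomial.X ^ 2 - Polynomial.C a))‖ ^ 2 := by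
    rw [h2, h2']
    simp only [Polynomial.eval_sub, Polynomial.eval_pow, Polynomial.eval_X, Polynomial.eval_C,
      one_pow]
    apply norm_lt_one
    simp [ha]
  obtain ⟨z, hz, -⟩ := hensels_lemma hlt
  refine ⟨z, ?_⟩
  simpa [sub_eq_zero] using hz

/-- E12 of a multiple of 3 is a commutator. -/
lemma E12_mem_comm (x : R) (hx : PadicInt.toZMod x = 0) : E12 x ∈ ⁅SL2Z3, SL2Z3⁆ := by
  obtain ⟨s, rfl⟩ := exists_three_mul x hx
  have hu : ((isUnit_two.unit : Rˣ) : R) = 2 := isUnit_two.unit_spec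
  have : (3 : R) * s = ((isUnit_two.unit : Rˣ) : R) * ((isUnit_two.unit : Rˣ) : R) * s - s := by
    rw [hu]; ring
  rw [this, ← comm_E12]
  exact Subgroup.commutator_mem_commutator (Dm_mem _) (E12_mem _)

/-- E21 of a multiple of 3 is a commutator. -/
lemma E21_mem_comm (x : R) (hx : PadicInt.toZMod x = 0) : E21 x ∈ ⁅SL2Z3, SL2Z3⁆ := by
  obtain ⟨s, rfl⟩ := exists_three_mul x hx
  set u := isUnit_two.unit with hudef
  have hu : ((u : Rˣ) : R) = 2 := isUnit_two.unit_spec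
  have hinv : (2 : R) * ((u⁻¹ : Rˣ) : R) = 1 := by rw [← hu]; exact u.mul_inv
  have : (3 : R) * s = ((u⁻¹ : Rˣ) : R) * ((u⁻¹ : Rˣ) : R) * (-(4*s)) - (-(4*s)) := by
    linear_combination (s * (2 * ((u⁻¹ : Rˣ) : R) + 1)) * hinv
  rw [this, ← comm_E21]
  exact Subgroup.commutator_mem_commutator (Dm_mem _) (E21_mem _)

/-- diag(u², u⁻²) is a commutator. -/
lemma Dm_sq_mem_comm (z : Rˣ) : Dm (z * z) ∈ ⁅SL2Z3, SL2Z3⁆ := by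
  have : Dm (z * z) = ⁅W, Dm z⁻¹⁆ := by rw [comm_W_Dm, inv_inv]
  rw [this]
  exact Subgroup.commutator_mem_commutator W_mem (Dm_mem _)


lemma mem_commutator_of_reduction (A : GL (Fin 2) R) (hA : A ∈ SL2Z3)
    (h1 : Matrix.GeneralLinearGroup.map (PadicInt.toZMod : ℤ_[3] →+* ZMod 3) A = 1) :
    A ∈ (⁅SL2Z3, SL2Z3⁆ : Subgroup (GL (Fin 2) ℤ_[3])) := by
  have hmap : (A : Matrix (Fin 2) (Fin 2) R).map PadicInt.toZMod = 1 := by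
    have := congrArg Units.val h1
    simpa [Matrix.GeneralLinearGroup.map, RingHom.mapMatrix_apply] using this
  have hent : ∀ i j, PadicInt.toZMod ((A : Matrix (Fin 2) (Fin 2) R) i j)
      = (1 : Matrix (Fin 2) (Fin 2) (ZMod 3)) i j := by
    intro i j
    have := congrFun (congrFun hmap i) j
    simpa [Matrix.map_apply] using this
  have ha : PadicInt.toZMod ((A : Matrix (Fin 2) (Fin 2) R) 0 0) = 1 := by
    simpa [Matrix.one_apply] using hent 0 0
  have hb : PadicInt.toZMod ((A : Matrix (Fin 2) (Fin 2) R) 0 1) = 0 := by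
    simpa [Matrix.one_apply] using hent 0 1
  have hc : PadicInt.toZMod ((A : Matrix (Fin 2) (Fin 2) R) 1 0) = 0 := by
    simpa [Matrix.one_apply] using hent 1 0
  have hdet : (A : Matrix (Fin 2) (Fin 2) R) 0 0 * (A : Matrix (Fin 2) (Fin 2) R) 1 1
      - (A : Matrix (Fin 2) (Fin 2) R) 0 1 * (A : Matrix (Fin 2) (Fin 2) R) 1 0 = 1 := by
    have := det_of_mem hA
    rwa [Matrix.det_fin_two] at this
  obtain ⟨z, hz⟩ := exists_sqrt _ ha
  have hzu : IsUnit z := by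
    apply isUnit_of_toZMod_ne
    intro h0
    rw [← hz, map_pow, h0] at ha
    simp at ha
  set uz := hzu.unit with huz
  have hva : ((uz * uz : Rˣ) : R) = (A : Matrix (Fin 2) (Fin 2) R) 0 0 := by
    rw [Units.val_mul, hzu.unit_spec, ← pow_two, hz]
  set ai : R := (((uz * uz)⁻¹ : Rˣ) : R) with hai_def
  have hai : (A : Matrix (Fin 2) (Fin 2) R) 0 0 * ai = 1 := by
    rw [← hva]; exact_mod_cast (uz * uz).mul_inv
  have hdecomp : A = E21 ((A : Matrix (Fin 2) (Fin 2) R) 1 0 * ai) * Dm (uz * uz)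
      * E12 ((A : Matrix (Fin 2) (Fin 2) R) 0 1 * ai) := by
    apply Units.ext
    simp only [Units.val_mul, val_E21, val_Dm, val_E12, Matrix.mul_fin_two]
    rw [Matrix.eta_fin_two (A : Matrix (Fin 2) (Fin 2) R)]
    have hva' : ((uz : Rˣ) : R) * ((uz : Rˣ) : R) = (A : Matrix (Fin 2) (Fin 2) R) 0 0 := by
      rw [← hva, Units.val_mul]
    have hai2 : ai = ((uz⁻¹ : Rˣ) : R) * ((uz⁻¹ : Rˣ) : R) := by
      rw [hai_def, mul_inv, Units.val_mul]
    ext i j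
    fin_cases i <;> fin_cases j <;> simp
    · linear_combination -hva'
    · linear_combination (-((A : Matrix (Fin 2) (Fin 2) R) 0 1 * ai)) * hva'
        - ((A : Matrix (Fin 2) (Fin 2) R) 0 1) * hai
    · linear_combination (-((A : Matrix (Fin 2) (Fin 2) R) 1 0 * ai)) * hva'
        - ((A : Matrix (Fin 2) (Fin 2) R) 1 0) * hai
    · linear_combination
        (-((A : Matrix (Fin 2) (Fin 2) R) 1 0 * (A : Matrix (Fin 2) (Fin 2) R) 0 1 * ai
          + (A : Matrix (Fin 2) (Fin 2) R) 1 1)) * hai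
        + ai * hdet
        - ((A : Matrix (Fin 2) (Fin 2) R) 1 0 * (A : Matrix (Fin 2) (Fin 2) R) 0 1 * ai * ai) * hva'
        + hai2
  have hmemb : PadicInt.toZMod ((A : Matrix (Fin 2) (Fin 2) R) 0 1 * ai) = 0 := by
    rw [_root_.map_mul, hb, zero_mul]
  have hmemc : PadicInt.toZMod ((A : Matrix (Fin 2) (Fin 2) R) 1 0 * ai) = 0 := by
    rw [_root_.map_mul, hc, zero_mul]
  rw [hdecomp]
  exact mul_mem (mul_mem (E21_mem_comm _ hmemc) (Dm_sq_mem_comm uz)) (E12_mem_comm _ hmemb)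

lemma toZMod_eq_zero_iff (x : R) : PadicInt.toZMod x = 0 ↔ ‖x‖ < 1 := by
  rw [← PadicInt.mem_nonunits, ← IsLocalRing.mem_maximalIdeal, ← PadicInt.ker_toZMod,
    RingHom.mem_ker]

lemma isOpen_fiber (c : ZMod 3) : IsOpen {x : R | PadicInt.toZMod x = c} := by
  have hx0 : PadicInt.toZMod ((c.val : ℕ) : R) = c := by
    rw [map_natCast, ZMod.natCast_val, ZMod.cast_id]
  have hset : {x : R | PadicInt.toZMod x = c} = Metric.ball ((c.val : ℕ) : R) 1 := by
    ext x
    simp only [Set.mem_setOf_eq, Metric.mem_ball, dist_eq_norm]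
    rw [← toZMod_eq_zero_iff, map_sub, hx0, sub_eq_zero]
  rw [hset]
  exact Metric.isOpen_ball

/-- the level-3 congruence subgroup of `GL₂(ℤ₃)` -/
noncomputable def Kred : Subgroup (GL (Fin 2) R) :=
  (Matrix.GeneralLinearGroup.map (PadicInt.toZMod : ℤ_[3] →+* ZMod 3)).ker

lemma val_glmap (U : GL (Fin 2) R) :
    ((Matrix.GeneralLinearGroup.map (PadicInt.toZMod : ℤ_[3] →+* ZMod 3) U :
      GL (Fin 2) (ZMod 3)) : Matrix (Fin 2) (Fin 2) (ZMod 3))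
    = (U : Matrix (Fin 2) (Fin 2) R).map PadicInt.toZMod := rfl

lemma mem_Kred_iff (U : GL (Fin 2) R) : U ∈ Kred ↔
    ∀ i j, PadicInt.toZMod ((U : Matrix (Fin 2) (Fin 2) R) i j)
      = (1 : Matrix (Fin 2) (Fin 2) (ZMod 3)) i j := by
  rw [Kred, MonoidHom.mem_ker, Units.ext_iff, val_glmap, Units.val_one]
  constructor
  · intro h i j
    rw [← Matrix.map_apply (f := (PadicInt.toZMod : ℤ_[3] → ZMod 3)), h]
  · intro h
    ext i j
    rw [Matrix.map_apply]
    exact h i j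

lemma isOpen_Kred : IsOpen ((Kred : Set (GL (Fin 2) R))) := by
  have hset : (Kred : Set (GL (Fin 2) R)) =
      ⋂ (i : Fin 2) (j : Fin 2),
        (fun U : GL (Fin 2) R => (U : Matrix (Fin 2) (Fin 2) R) i j) ⁻¹'
          {x : R | PadicInt.toZMod x = (1 : Matrix (Fin 2) (Fin 2) (ZMod 3)) i j} := by
    ext U
    simp only [SetLike.mem_coe, mem_Kred_iff, Set.mem_iInter, Set.mem_preimage,
      Set.mem_setOf_eq]
  rw [hset]
  refine isOpen_iInter_of_finite fun i => isOpen_iInter_of_finite fun j => ?_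
  have hc : Continuous (fun U : GL (Fin 2) R => (U : Matrix (Fin 2) (Fin 2) R) i j) := by
    have h1 : Continuous (fun M : Matrix (Fin 2) (Fin 2) R => M i j) :=
      (continuous_apply j).comp (continuous_apply i)
    exact h1.comp Units.continuous_val
  exact (isOpen_fiber _).preimage hc

lemma isClosed_SL : IsClosed (SL2Z3 : Set (GL (Fin 2) R)) := by
  have hset : (SL2Z3 : Set (GL (Fin 2) R)) =
      (fun U : GL (Fin 2) R => Matrix.det (U : Matrix (Fin 2) (Fin 2) R)) ⁻¹' {1} := by
    ext U
    simp only [Set.mem_preimage, Set.mem_singleton_iff, SetLike.mem_coe]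
    exact ⟨det_of_mem, mem_SL⟩
  rw [hset]
  exact IsClosed.preimage (Continuous.matrix_det Units.continuous_val) isClosed_singleton

/-- reduction mod 3 restricted to SL₂(ℤ₃) -/
noncomputable def fres : ↥SL2Z3 →* GL (Fin 2) (ZMod 3) :=
  (Matrix.GeneralLinearGroup.map (PadicInt.toZMod : ℤ_[3] →+* ZMod 3)).comp SL2Z3.subtype

lemma map_comm :
    Subgroup.map SL2Z3.subtype (commutator ↥SL2Z3) = ⁅SL2Z3, SL2Z3⁆ := by
  rw [commutator_def, Subgroup.map_commutator, ← MonoidHom.range_eq_map,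
    Subgroup.range_subtype]

lemma ker_le_commutator : fres.ker ≤ commutator ↥SL2Z3 := by
  intro x hx
  rw [MonoidHom.mem_ker] at hx
  have hx' : (x : GL (Fin 2) R) ∈ (⁅SL2Z3, SL2Z3⁆ : Subgroup (GL (Fin 2) R)) :=
    mem_commutator_of_reduction _ x.2 hx
  rw [← map_comm] at hx'
  obtain ⟨y, hy, hyx⟩ := hx'
  have : y = x := Subtype.ext (by simpa using hyx)
  rwa [← this]

lemma isOpen_ker : IsOpen ((fres.ker : Set ↥SL2Z3)) := by
  have hset : ((fres.ker : Set ↥SL2Z3)) =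
      (Subtype.val : ↥SL2Z3 → GL (Fin 2) R) ⁻¹' (Kred : Set (GL (Fin 2) R)) := by
    ext x
    simp only [SetLike.mem_coe, MonoidHom.mem_ker, Set.mem_preimage]
    rfl
  rw [hset]
  exact isOpen_Kred.preimage continuous_subtype_val

lemma isOpen_commutator : IsOpen ((commutator ↥SL2Z3 : Subgroup ↥SL2Z3) : Set ↥SL2Z3) :=
  Subgroup.isOpen_mono ker_le_commutator isOpen_ker

lemma isClosed_comm_set :
    IsClosed ((⁅SL2Z3, SL2Z3⁆ : Subgroup (GL (Fin 2) R)) : Set (GL (Fin 2) R)) := by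
  have h1 : IsClosed ((commutator ↥SL2Z3 : Subgroup ↥SL2Z3) : Set ↥SL2Z3) :=
    Subgroup.isClosed_of_isOpen _ isOpen_commutator
  have himg := isClosed_SL.isClosedEmbedding_subtypeVal.isClosedMap _ h1
  have hset : ((⁅SL2Z3, SL2Z3⁆ : Subgroup (GL (Fin 2) R)) : Set (GL (Fin 2) R)) =
      (Subtype.val : ↥SL2Z3 → GL (Fin 2) R) ''
        ((commutator ↥SL2Z3 : Subgroup ↥SL2Z3) : Set ↥SL2Z3) := by
    rw [← map_comm, Subgroup.coe_map]
    rfl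
  rwa [hset]

lemma comm_eq : commSL2Z3 = (⁅SL2Z3, SL2Z3⁆ : Subgroup (GL (Fin 2) R)) :=
  le_antisymm (Subgroup.topologicalClosure_minimal _ le_rfl isClosed_comm_set)
    (Subgroup.le_topologicalClosure _)

lemma relindex_eq : commSL2Z3.relIndex SL2Z3 = (commutator ↥SL2Z3).index := by
  rw [comm_eq, Subgroup.relIndex]
  congr 1
  rw [← map_comm, Subgroup.subgroupOf,
    Subgroup.comap_map_eq_self_of_injective SL2Z3.subtype_injective]

lemma index_commutator_eq :
    (commutator ↥SL2Z3).index = (⁅fres.range, fres.range⁆).relIndex fres.range := by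
  conv_lhs => rw [← Subgroup.comap_map_eq_self ker_le_commutator]
  rw [Subgroup.index_comap, commutator_def, Subgroup.map_commutator,
    ← MonoidHom.range_eq_map]

/-- `SL₂(𝔽₃)` as subgroup of `GL₂(𝔽₃)` -/
def SL0 : Subgroup (GL (Fin 2) (ZMod 3)) :=
  (Matrix.GeneralLinearGroup.det : GL (Fin 2) (ZMod 3) →* (ZMod 3)ˣ).ker

lemma range_fres : fres.range = SL0 := by
  apply le_antisymm
  · rintro - ⟨y, rfl⟩
    have hy : Matrix.GeneralLinearGroup.det (y : GL (Fin 2) R) = 1 := y.2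
    rw [SL0, MonoidHom.mem_ker]
    show Matrix.GeneralLinearGroup.det
      (Matrix.GeneralLinearGroup.map (PadicInt.toZMod : ℤ_[3] →+* ZMod 3) y.val) = 1
    rw [Matrix.GeneralLinearGroup.map_det, hy, _root_.map_one]
  · intro U hU
    have hdetU : Matrix.det ((U : GL (Fin 2) (ZMod 3)) : Matrix (Fin 2) (Fin 2) (ZMod 3))
        = 1 := by
      rw [SL0, MonoidHom.mem_ker] at hU
      have := congrArg Units.val hU
      simpa using this
    set N : Matrix (Fin 2) (Fin 2) R :=
      fun i j => ((((U : Matrix (Fin 2) (Fin 2) (ZMod 3)) i j).val : ℕ) : R) with hN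
    have hNmap : N.map PadicInt.toZMod = (U : Matrix (Fin 2) (Fin 2) (ZMod 3)) := by
      ext i j
      rw [Matrix.map_apply, hN, map_natCast, ZMod.natCast_val, ZMod.cast_id]
    have hdetred : PadicInt.toZMod (Matrix.det N) = 1 := by
      rw [RingHom.map_det, RingHom.mapMatrix_apply, hNmap, hdetU]
    have hu : IsUnit (Matrix.det N) :=
      isUnit_of_toZMod_ne _ (by rw [hdetred]; exact one_ne_zero)
    set M2 : Matrix (Fin 2) (Fin 2) R := !![1, 0; 0, ((hu.unit⁻¹ : Rˣ) : R)] with hM2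
    have hdetM' : Matrix.det (N * M2) = 1 := by
      rw [Matrix.det_mul, hM2, Matrix.det_fin_two_of]
      have : Matrix.det N * ((hu.unit⁻¹ : Rˣ) : R) = ((hu.unit : Rˣ) : R)
          * ((hu.unit⁻¹ : Rˣ) : R) := by rw [hu.unit_spec]
      rw [show (1 : R) * ((hu.unit⁻¹ : Rˣ) : R) - 0 * 0 = ((hu.unit⁻¹ : Rˣ) : R) by ring]
      rw [show Matrix.det N * ((hu.unit⁻¹ : Rˣ) : R) = ((hu.unit : Rˣ) : R)
          * ((hu.unit⁻¹ : Rˣ) : R) by rw [hu.unit_spec]]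
      exact hu.unit.mul_inv
    have hA : IsUnit (N * M2) := by
      rw [Matrix.isUnit_iff_isUnit_det, hdetM']
      exact isUnit_one
    refine ⟨⟨hA.unit, mem_SL (by rw [hA.unit_spec]; exact hdetM')⟩, ?_⟩
    apply Units.ext
    show ((hA.unit : Matrix (Fin 2) (Fin 2) R)).map PadicInt.toZMod = _
    rw [hA.unit_spec, Matrix.map_mul, hNmap]
    have htoZu : PadicInt.toZMod ((hu.unit⁻¹ : Rˣ) : R) = 1 := by
      have h1 : PadicInt.toZMod (((hu.unit : Rˣ) : R) * ((hu.unit⁻¹ : Rˣ) : R)) = 1 := by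
        rw [hu.unit.mul_inv, _root_.map_one]
      rw [_root_.map_mul, hu.unit_spec, hdetred, one_mul] at h1
      exact h1
    have hM2map : M2.map PadicInt.toZMod = 1 := by
      rw [hM2, Matrix.one_fin_two]
      ext i j
      rw [Matrix.map_apply]
      fin_cases i <;> fin_cases j <;> simp [htoZu]
    rw [hM2map, mul_one]



abbrev F := ZMod 3

set_option maxRecDepth 40000

def l : List (Matrix (Fin 2) (Fin 2) F) :=
  [!![1,0;0,1], !![2,0;0,2], !![0,2;1,0], !![0,1;2,0],
   !![1,1;1,2], !![2,1;1,1], !![2,2;2,1], !![1,2;2,2]]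


lemma mem_SL0_iff (U : GL (Fin 2) F) :
    U ∈ SL0 ↔ Matrix.det (U : Matrix (Fin 2) (Fin 2) F) = 1 := by
  rw [SL0, MonoidHom.mem_ker, Units.ext_iff]
  simp

def mQ : Subgroup (GL (Fin 2) F) where
  carrier := {U : GL (Fin 2) F | (U : Matrix (Fin 2) (Fin 2) F) ∈ l}
  one_mem' := by
    show ((1 : GL (Fin 2) F) : Matrix (Fin 2) (Fin 2) F) ∈ l
    rw [Units.val_one]
    decide
  mul_mem' := by
    intro a b ha hb
    show ((a * b : GL (Fin 2) F) : Matrix (Fin 2) (Fin 2) F) ∈ l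
    rw [Units.val_mul]
    exact (by decide : ∀ M ∈ l, ∀ N ∈ l, M * N ∈ l) _ ha _ hb
  inv_mem' := by
    intro a ha
    obtain ⟨N, hN, hMN⟩ := (by decide : ∀ M ∈ l, ∃ N, N ∈ l ∧ M * N = 1) _ ha
    show ((a⁻¹ : GL (Fin 2) F) : Matrix (Fin 2) (Fin 2) F) ∈ l
    have hval : ((a⁻¹ : GL (Fin 2) F) : Matrix (Fin 2) (Fin 2) F) = N := by
      calc ((a⁻¹ : GL (Fin 2) F) : Matrix (Fin 2) (Fin 2) F)
          = (a⁻¹ : GL (Fin 2) F).val * ((a : GL (Fin 2) F).val * N) := by rw [hMN, mul_one]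
        _ = ((a⁻¹ : GL (Fin 2) F).val * (a : GL (Fin 2) F).val) * N := by rw [mul_assoc]
        _ = N := by rw [a.inv_mul, one_mul]
    rw [hval]
    exact hN

set_option maxHeartbeats 4000000 in
set_option maxRecDepth 40000 in
lemma hcore : ∀ M N : Matrix (Fin 2) (Fin 2) F, M.det = 1 → N.det = 1 →
    M * N * !![M 1 1, -M 0 1; -M 1 0, M 0 0] * !![N 1 1, -N 0 1; -N 1 0, N 0 0] ∈ l := by
  decide

lemma val_inv (g : GL (Fin 2) F) (h : Matrix.det (g : Matrix (Fin 2) (Fin 2) F) = 1) :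
    ((g⁻¹ : GL (Fin 2) F) : Matrix (Fin 2) (Fin 2) F) =
      !![g.val 1 1, -g.val 0 1; -g.val 1 0, g.val 0 0] := by
  have hadj : (g : Matrix (Fin 2) (Fin 2) F) *
      !![g.val 1 1, -g.val 0 1; -g.val 1 0, g.val 0 0] = 1 := by
    rw [← Matrix.adjugate_fin_two, Matrix.mul_adjugate, h, one_smul]
  calc ((g⁻¹ : GL (Fin 2) F) : Matrix (Fin 2) (Fin 2) F)
      = (g⁻¹ : GL (Fin 2) F).val * ((g : GL (Fin 2) F).val *
        !![g.val 1 1, -g.val 0 1; -g.val 1 0, g.val 0 0]) := by rw [hadj, mul_one]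
    _ = ((g⁻¹ : GL (Fin 2) F).val * (g : GL (Fin 2) F).val) *
        !![g.val 1 1, -g.val 0 1; -g.val 1 0, g.val 0 0] := by rw [mul_assoc]
    _ = _ := by rw [g.inv_mul, one_mul]

lemma comm_le_mQ : (⁅SL0, SL0⁆ : Subgroup (GL (Fin 2) F)) ≤ mQ := by
  rw [Subgroup.commutator_le]
  intro g hg h hh
  have hg' := (mem_SL0_iff g).mp hg
  have hh' := (mem_SL0_iff h).mp hh
  show ((⁅g, h⁆ : GL (Fin 2) F) : Matrix (Fin 2) (Fin 2) F) ∈ l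
  rw [commutatorElement_def, Units.val_mul, Units.val_mul, Units.val_mul,
    val_inv g hg', val_inv h hh']
  exact hcore _ _ hg' hh'

def gu : GL (Fin 2) F := ⟨!![1,1;0,1], !![1,2;0,1], by decide, by decide⟩
def gl : GL (Fin 2) F := ⟨!![1,0;1,1], !![1,0;2,1], by decide, by decide⟩
def glp : GL (Fin 2) F := ⟨!![1,0;2,1], !![1,0;1,1], by decide, by decide⟩

lemma gu_mem : gu ∈ SL0 := (mem_SL0_iff _).mpr (by decide)
lemma gl_mem : gl ∈ SL0 := (mem_SL0_iff _).mpr (by decide)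
lemma glp_mem : glp ∈ SL0 := (mem_SL0_iff _).mpr (by decide)

noncomputable def I0 : GL (Fin 2) F := ⁅gu, gl⁆
noncomputable def J0 : GL (Fin 2) F := ⁅gu, glp⁆

lemma I0_mem : I0 ∈ (⁅SL0, SL0⁆ : Subgroup (GL (Fin 2) F)) :=
  Subgroup.commutator_mem_commutator gu_mem gl_mem
lemma J0_mem : J0 ∈ (⁅SL0, SL0⁆ : Subgroup (GL (Fin 2) F)) :=
  Subgroup.commutator_mem_commutator gu_mem glp_mem

lemma I0_val : (I0 : Matrix (Fin 2) (Fin 2) F) = !![0,2;1,0] := by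
  show ((⁅gu, gl⁆ : GL (Fin 2) F) : Matrix (Fin 2) (Fin 2) F) = _
  rw [commutatorElement_def, Units.val_mul, Units.val_mul, Units.val_mul]
  decide

lemma J0_val : (J0 : Matrix (Fin 2) (Fin 2) F) = !![1,1;1,2] := by
  show ((⁅gu, glp⁆ : GL (Fin 2) F) : Matrix (Fin 2) (Fin 2) F) = _
  rw [commutatorElement_def, Units.val_mul, Units.val_mul, Units.val_mul]
  decide

lemma mQ_le_comm : mQ ≤ (⁅SL0, SL0⁆ : Subgroup (GL (Fin 2) F)) := by
  intro U hU
  have hU' : (U : Matrix (Fin 2) (Fin 2) F) ∈ l := hU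
  have hcomm := (⁅SL0, SL0⁆ : Subgroup (GL (Fin 2) F))
  simp only [l, List.mem_cons, List.not_mem_nil, or_false] at hU'
  rcases hU' with h | h | h | h | h | h | h | h
  · have : U = 1 := Units.ext (by rw [h, Units.val_one]; decide)
    rw [this]; exact one_mem _
  · have : U = I0 * I0 :=
      Units.ext (by rw [h, Units.val_mul, I0_val]; decide)
    rw [this]; exact mul_mem I0_mem I0_mem
  · have : U = I0 := Units.ext (by rw [h, I0_val])
    rw [this]; exact I0_mem
  · have : U = I0 * I0 * I0 :=
      Units.ext (by rw [h, Units.val_mul, Units.val_mul, I0_val]; decide)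
    rw [this]; exact mul_mem (mul_mem I0_mem I0_mem) I0_mem
  · have : U = J0 := Units.ext (by rw [h, J0_val])
    rw [this]; exact J0_mem
  · have : U = I0 * J0 :=
      Units.ext (by rw [h, Units.val_mul, I0_val, J0_val]; decide)
    rw [this]; exact mul_mem I0_mem J0_mem
  · have : U = I0 * I0 * J0 :=
      Units.ext (by rw [h, Units.val_mul, Units.val_mul, I0_val, J0_val]; decide)
    rw [this]; exact mul_mem (mul_mem I0_mem I0_mem) J0_mem
  · have : U = I0 * I0 * I0 * J0 :=
      Units.ext (by rw [h, Units.val_mul, Units.val_mul, Units.val_mul, I0_val, J0_val]; decide)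
    rw [this]; exact mul_mem (mul_mem (mul_mem I0_mem I0_mem) I0_mem) J0_mem

lemma comm_eq_mQ : (⁅SL0, SL0⁆ : Subgroup (GL (Fin 2) F)) = mQ :=
  le_antisymm comm_le_mQ mQ_le_comm

noncomputable def mkUnit (M : Matrix (Fin 2) (Fin 2) F) (h : M.det = 1) : GL (Fin 2) F :=
  ((Matrix.isUnit_iff_isUnit_det M).mpr (by rw [h]; exact isUnit_one)).unit

lemma mkUnit_val (M : Matrix (Fin 2) (Fin 2) F) (h : M.det = 1) :
    (mkUnit M h : Matrix (Fin 2) (Fin 2) F) = M := IsUnit.unit_spec _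

noncomputable def eSL : ↥SL0 ≃ {M : Matrix (Fin 2) (Fin 2) F // M.det = 1} where
  toFun x := ⟨(x : GL (Fin 2) F), (mem_SL0_iff _).mp x.2⟩
  invFun m := ⟨mkUnit m.1 m.2, (mem_SL0_iff _).mpr (by rw [mkUnit_val]; exact m.2)⟩
  left_inv x := Subtype.ext (Units.ext (by simp [mkUnit, IsUnit.unit_spec]))
  right_inv m := Subtype.ext (mkUnit_val m.1 m.2)

lemma card_SL0 : Nat.card ↥SL0 = 24 := by
  rw [Nat.card_congr eSL, Nat.card_eq_fintype_card]
  decide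

lemma l_det : ∀ M ∈ l, M.det = 1 := by decide

noncomputable def eQ : ↥(mQ.subgroupOf SL0) ≃ {M : Matrix (Fin 2) (Fin 2) F // M ∈ l} where
  toFun x := ⟨((x : ↥SL0) : GL (Fin 2) F), by
    have := x.2
    rw [Subgroup.mem_subgroupOf] at this
    exact this⟩
  invFun m := ⟨⟨mkUnit m.1 (l_det _ m.2),
      (mem_SL0_iff _).mpr (by rw [mkUnit_val]; exact l_det _ m.2)⟩, by
    rw [Subgroup.mem_subgroupOf]
    show _ ∈ l
    rw [mkUnit_val]
    exact m.2⟩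
  left_inv x := Subtype.ext (Subtype.ext (Units.ext (by simp [mkUnit, IsUnit.unit_spec])))
  right_inv m := Subtype.ext (mkUnit_val m.1 (l_det _ m.2))

lemma card_Q : Nat.card ↥(mQ.subgroupOf SL0) = 8 := by
  rw [Nat.card_congr eQ, Nat.card_eq_fintype_card]
  decide

lemma relindex_comm_SL0 : (⁅SL0, SL0⁆ : Subgroup (GL (Fin 2) F)).relIndex SL0 = 3 := by
  rw [comm_eq_mQ, Subgroup.relIndex]
  have h := Subgroup.index_mul_card (mQ.subgroupOf SL0)
  rw [card_Q, card_SL0] at h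
  omega


end SL2Z3Aux

/-- The commutator subgroup of `SL₂(ℤ₃)` is an open subgroup of index 3, and it
contains every matrix in `SL₂(ℤ₃)` that is congruent to the identity modulo 3. -/
theorem commutator_SL2_Z3 :
    commSL2Z3 ≤ SL2Z3 ∧
    IsOpen {x : SL2Z3 | (x : GL (Fin 2) ℤ_[3]) ∈ commSL2Z3} ∧
    commSL2Z3.relIndex SL2Z3 = 3 ∧
    ∀ A : GL (Fin 2) ℤ_[3], A ∈ SL2Z3 →
      Matrix.GeneralLinearGroup.map (PadicInt.toZMod : ℤ_[3] →+* ZMod 3) A = 1 →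
      A ∈ commSL2Z3 := by
  refine ⟨?_, ?_, ?_, ?_⟩
  · rw [SL2Z3Aux.comm_eq, Subgroup.commutator_le]
    intro g hg h hh
    exact mul_mem (mul_mem (mul_mem hg hh) (inv_mem hg)) (inv_mem hh)
  · have hset : {x : ↥SL2Z3 | (x : GL (Fin 2) ℤ_[3]) ∈ commSL2Z3}
        = ((commutator ↥SL2Z3 : Subgroup ↥SL2Z3) : Set ↥SL2Z3) := by
      ext x
      simp only [Set.mem_setOf_eq, SetLike.mem_coe]
      rw [SL2Z3Aux.comm_eq, ← SL2Z3Aux.map_comm]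
      constructor
      · rintro ⟨y, hy, hyx⟩
        have hxy : y = x := Subtype.ext hyx
        rwa [← hxy]
      · intro hx
        exact ⟨x, hx, rfl⟩
    rw [hset]
    exact SL2Z3Aux.isOpen_commutator
  · rw [SL2Z3Aux.relindex_eq, SL2Z3Aux.index_commutator_eq, SL2Z3Aux.range_fres]
    exact SL2Z3Aux.relindex_comm_SL0
  · intro A hA h1
    exact Subgroup.le_topologicalClosure _ (SL2Z3Aux.mem_commutator_of_reduction A hA h1)
end

section
/- The commutator subgroup of GL₂(ℤ₂) is an index 2 subgroup of SL₂(ℤ₂) that contains every matrix A ∈ SL₂(ℤ₂) with A ≡ I (mod 2). -/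
open Matrix

/-- The subgroup `SL₂(ℤ₂)` of `GL₂(ℤ₂)`, realized as the kernel of the determinant. -/
noncomputable def SL2Z2 : Subgroup (GL (Fin 2) ℤ_[2]) :=
  (Matrix.GeneralLinearGroup.det : GL (Fin 2) ℤ_[2] →* ℤ_[2]ˣ).ker

/-- The closed (topological) commutator subgroup of `GL₂(ℤ₂)`. -/
noncomputable def commGL2Z2 : Subgroup (GL (Fin 2) ℤ_[2]) :=
  (commutator (GL (Fin 2) ℤ_[2])).topologicalClosure

open scoped commutatorElement

noncomputable section AuxComm

/-- reduction mod 2 -/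
abbrev redGL : GL (Fin 2) ℤ_[2] →* GL (Fin 2) (ZMod 2) :=
  Matrix.GeneralLinearGroup.map (PadicInt.toZMod : ℤ_[2] →+* ZMod 2)

def E12 (x : ℤ_[2]) : GL (Fin 2) ℤ_[2] :=
  ⟨!![1,x;0,1], !![1,-x;0,1],
    by ext i j; fin_cases i <;> fin_cases j <;> simp [Matrix.mul_apply, Fin.sum_univ_two],
    by ext i j; fin_cases i <;> fin_cases j <;> simp [Matrix.mul_apply, Fin.sum_univ_two]⟩

def E21 (x : ℤ_[2]) : GL (Fin 2) ℤ_[2] :=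
  ⟨!![1,0;x,1], !![1,0;-x,1],
    by ext i j; fin_cases i <;> fin_cases j <;> simp [Matrix.mul_apply, Fin.sum_univ_two],
    by ext i j; fin_cases i <;> fin_cases j <;> simp [Matrix.mul_apply, Fin.sum_univ_two]⟩

def DU (t : ℤ_[2]ˣ) : GL (Fin 2) ℤ_[2] :=
  ⟨!![(t:ℤ_[2]),0;0,1], !![((t⁻¹:ℤ_[2]ˣ):ℤ_[2]),0;0,1],
    by ext i j; fin_cases i <;> fin_cases j <;> simp [Matrix.mul_apply, Fin.sum_univ_two],
    by ext i j; fin_cases i <;> fin_cases j <;> simp [Matrix.mul_apply, Fin.sum_univ_two]⟩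

def Dg : GL (Fin 2) ℤ_[2] :=
  ⟨!![-1,0;0,1], !![-1,0;0,1],
    by ext i j; fin_cases i <;> fin_cases j <;> simp [Matrix.mul_apply, Fin.sum_univ_two],
    by ext i j; fin_cases i <;> fin_cases j <;> simp [Matrix.mul_apply, Fin.sum_univ_two]⟩

def Wg : GL (Fin 2) ℤ_[2] :=
  ⟨!![0,1;-1,0], !![0,-1;1,0],
    by ext i j; fin_cases i <;> fin_cases j <;> simp [Matrix.mul_apply, Fin.sum_univ_two],
    by ext i j; fin_cases i <;> fin_cases j <;> simp [Matrix.mul_apply, Fin.sum_univ_two]⟩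

def Dt (t : ℤ_[2]ˣ) : GL (Fin 2) ℤ_[2] :=
  ⟨!![(t:ℤ_[2]),0;0,((t⁻¹:ℤ_[2]ˣ):ℤ_[2])], !![((t⁻¹:ℤ_[2]ˣ):ℤ_[2]),0;0,(t:ℤ_[2])],
    by ext i j; fin_cases i <;> fin_cases j <;> simp [Matrix.mul_apply, Fin.sum_univ_two],
    by ext i j; fin_cases i <;> fin_cases j <;> simp [Matrix.mul_apply, Fin.sum_univ_two]⟩

lemma E12_eq_comm (y : ℤ_[2]) : E12 (2*y) = ⁅Dg, E12 (-y)⁆ := by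
  ext i j
  fin_cases i <;> fin_cases j <;>
    simp [E12, Dg, commutatorElement_def, Units.val_mul, Matrix.mul_apply, Fin.sum_univ_two] <;> ring

lemma E21_eq_comm (y : ℤ_[2]) : E21 (2*y) = ⁅Dg, E21 (-y)⁆ := by
  ext i j
  fin_cases i <;> fin_cases j <;>
    simp [E21, Dg, commutatorElement_def, Units.val_mul, Matrix.mul_apply, Fin.sum_univ_two] <;> ring

lemma Dt_eq_comm (t : ℤ_[2]ˣ) : Dt t = ⁅DU t, Wg⁆ := by
  ext i j
  fin_cases i <;> fin_cases j <;>
    simp [Dt, DU, Wg, commutatorElement_def, Units.val_mul, Matrix.mul_apply, Fin.sum_univ_two]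

lemma mem_comm_of_comm (g h : GL (Fin 2) ℤ_[2]) : ⁅g, h⁆ ∈ commGL2Z2 :=
  Subgroup.le_topologicalClosure _
    (commutator_def (GL (Fin 2) ℤ_[2]) ▸
      Subgroup.commutator_mem_commutator (Subgroup.mem_top g) (Subgroup.mem_top h))

lemma E12_mem {x : ℤ_[2]} (h : (2:ℤ_[2]) ∣ x) : E12 x ∈ commGL2Z2 := by
  obtain ⟨y, rfl⟩ := h
  rw [E12_eq_comm]; exact mem_comm_of_comm _ _

lemma E21_mem {x : ℤ_[2]} (h : (2:ℤ_[2]) ∣ x) : E21 x ∈ commGL2Z2 := by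
  obtain ⟨y, rfl⟩ := h
  rw [E21_eq_comm]; exact mem_comm_of_comm _ _

lemma Dt_mem (t : ℤ_[2]ˣ) : Dt t ∈ commGL2Z2 := by
  rw [Dt_eq_comm]; exact mem_comm_of_comm _ _

lemma toZMod_eq_zero_iff_dvd (x : ℤ_[2]) :
    PadicInt.toZMod x = 0 ↔ (2:ℤ_[2]) ∣ x := by
  rw [show (PadicInt.toZMod x = 0 ↔ x ∈ RingHom.ker (PadicInt.toZMod (p := 2))) from
      RingHom.mem_ker.symm, PadicInt.ker_toZMod, PadicInt.maximalIdeal_eq_span_p,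
    Ideal.mem_span_singleton]
  norm_num

lemma isUnit_of_toZMod_eq_one {a : ℤ_[2]} (h : PadicInt.toZMod a = 1) : IsUnit a := by
  by_contra hu
  have hlt : ‖a‖ < 1 := PadicInt.not_isUnit_iff.1 hu
  have : (2:ℤ_[2]) ∣ a := (PadicInt.norm_lt_one_iff_dvd a).1 hlt
  rw [← toZMod_eq_zero_iff_dvd] at this
  rw [this] at h
  exact absurd h (by decide)

end AuxComm
section Aux2
open PadicInt

lemma entries_of_red_eq_one {A : GL (Fin 2) ℤ_[2]} (h : redGL A = 1) (i j : Fin 2) :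
    PadicInt.toZMod (A.val i j) = (1 : Matrix (Fin 2) (Fin 2) (ZMod 2)) i j := by
  have hv : (redGL A).val = (1 : Matrix (Fin 2) (Fin 2) (ZMod 2)) := by rw [h]; rfl
  have := congrFun (congrFun hv i) j
  simpa [Matrix.GeneralLinearGroup.map, RingHom.mapMatrix_apply, Matrix.map_apply] using this

lemma key_lemma (A : GL (Fin 2) ℤ_[2]) (hA : A ∈ SL2Z2) (h1 : redGL A = 1) :
    A ∈ commGL2Z2 := by
  set a := A.val 0 0 with ha_def
  set b := A.val 0 1 with hb_def
  set c := A.val 1 0 with hc_def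
  set d := A.val 1 1 with hd_def
  have hdet : a * d - b * c = 1 := by
    have : (Matrix.GeneralLinearGroup.det A : ℤ_[2]) = 1 := by
      have hA' : Matrix.GeneralLinearGroup.det A = 1 := hA
      rw [hA']; rfl
    rwa [Matrix.GeneralLinearGroup.val_det_apply, Matrix.det_fin_two] at this
  have hta : PadicInt.toZMod a = 1 := by simpa using entries_of_red_eq_one h1 0 0
  have htb : (2:ℤ_[2]) ∣ b := by
    rw [← toZMod_eq_zero_iff_dvd]; simpa [Matrix.one_apply] using entries_of_red_eq_one h1 0 1
  have htc : (2:ℤ_[2]) ∣ c := by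
    rw [← toZMod_eq_zero_iff_dvd]; simpa [Matrix.one_apply] using entries_of_red_eq_one h1 1 0
  have hua : IsUnit a := isUnit_of_toZMod_eq_one hta
  set u := hua.unit with hu_def
  have huv : (u : ℤ_[2]) = a := hua.unit_spec
  have hdecomp : A = E21 (c * ((u⁻¹ : ℤ_[2]ˣ) : ℤ_[2])) * Dt u *
      E12 (((u⁻¹ : ℤ_[2]ˣ) : ℤ_[2]) * b) := by
    have hinv : (u : ℤ_[2]) * ((u⁻¹ : ℤ_[2]ˣ) : ℤ_[2]) = 1 := by
      rw [← Units.val_mul, mul_inv_cancel, Units.val_one]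
    have hane : a ≠ 0 := hua.ne_zero
    have h3 : a * ((u⁻¹ : ℤ_[2]ˣ) : ℤ_[2]) = 1 := by rw [← huv]; exact hinv
    ext i j
    fin_cases i <;> fin_cases j <;>
      simp [E12, E21, Dt, Units.val_mul, Matrix.mul_apply, Fin.sum_univ_two, huv, ← ha_def, ← hb_def,
        ← hc_def, ← hd_def]
    · linear_combination (-b) * h3
    · linear_combination (-c) * h3
    · apply mul_left_cancel₀ hane
      linear_combination hdet - (c * b * (a * ((u⁻¹ : ℤ_[2]ˣ) : ℤ_[2]) + 1) + 1) * h3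
  rw [hdecomp]
  exact Subgroup.mul_mem _ (Subgroup.mul_mem _
    (E21_mem (dvd_mul_of_dvd_left htc _)) (Dt_mem u))
    (E12_mem (dvd_mul_of_dvd_right htb _))

noncomputable section Aux3

def r2 : GL (Fin 2) (ZMod 2) := ⟨!![1,1;1,0], !![0,1;1,1], by decide, by decide⟩
def e12' : GL (Fin 2) (ZMod 2) := ⟨!![1,1;0,1], !![1,1;0,1], by decide, by decide⟩
def e21' : GL (Fin 2) (ZMod 2) := ⟨!![1,0;1,1], !![1,0;1,1], by decide, by decide⟩

def A3 : Subgroup (GL (Fin 2) (ZMod 2)) where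
  carrier := {B | B = 1 ∨ B = r2 ∨ B = r2 ^ 2}
  one_mem' := Or.inl rfl
  mul_mem' := by
    intro x y hx hy
    simp only [Set.mem_setOf_eq] at *
    rcases hx with rfl | rfl | rfl <;> rcases hy with rfl | rfl | rfl <;> decide
  inv_mem' := by
    intro x hx
    simp only [Set.mem_setOf_eq] at *
    rcases hx with rfl | rfl | rfl <;> decide

lemma mem_A3_iff (x : GL (Fin 2) (ZMod 2)) : x ∈ A3 ↔ x = 1 ∨ x = r2 ∨ x = r2 ^ 2 := Iff.rfl

def NN : Subgroup (GL (Fin 2) ℤ_[2]) := A3.comap redGL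

lemma comm_mem_A3 : ∀ B C : GL (Fin 2) (ZMod 2), ⁅B, C⁆ = 1 ∨ ⁅B, C⁆ = r2 ∨ ⁅B, C⁆ = r2 ^ 2 := by
  decide

lemma xor_A3 : ∀ B : GL (Fin 2) (ZMod 2),
    Xor' (B * e12' = 1 ∨ B * e12' = r2 ∨ B * e12' = r2 ^ 2) (B = 1 ∨ B = r2 ∨ B = r2 ^ 2) := by
  unfold Xor'
  decide

lemma comm_mem_SL2 (g h : GL (Fin 2) ℤ_[2]) : ⁅g, h⁆ ∈ SL2Z2 := by
  show Matrix.GeneralLinearGroup.det ⁅g, h⁆ = 1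
  rw [map_commutatorElement]
  exact commutatorElement_eq_one_iff_commute.mpr (mul_comm _ _)

lemma redE12 : redGL (E12 1) = e12' := by
  ext i j
  fin_cases i <;> fin_cases j <;>
    simp [E12, e12', Matrix.GeneralLinearGroup.map, RingHom.mapMatrix_apply, Matrix.map_apply]

lemma redE21 : redGL (E21 1) = e21' := by
  ext i j
  fin_cases i <;> fin_cases j <;>
    simp [E21, e21', Matrix.GeneralLinearGroup.map, RingHom.mapMatrix_apply, Matrix.map_apply]

/-- an element of the commutator subgroup reducing to `r2` mod 2 -/
noncomputable def cg : GL (Fin 2) ℤ_[2] := ⁅E12 1, E21 1⁆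

lemma red_cg : redGL cg = r2 := by
  rw [cg, map_commutatorElement, redE12, redE21]
  decide

lemma ge_lemma : SL2Z2 ⊓ NN ≤ commGL2Z2 := by
  rintro A ⟨hdet, hN⟩
  rcases (mem_A3_iff _).1 hN with h | h | h
  · exact key_lemma A hdet h
  · have h2 : redGL (cg⁻¹ * A) = 1 := by
      rw [MonoidHom.map_mul, MonoidHom.map_inv, red_cg, h, inv_mul_cancel]
    have hcgSL1 : cg ∈ SL2Z2 := comm_mem_SL2 _ _
    have h3 := key_lemma (cg⁻¹ * A) (Subgroup.mul_mem _ (Subgroup.inv_mem _ hcgSL1) hdet) h2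
    have hcgm : cg ∈ commGL2Z2 := mem_comm_of_comm (E12 1) (E21 1)
    have hA := Subgroup.mul_mem _ hcgm h3
    rwa [mul_inv_cancel_left] at hA
  · have h2 : redGL ((cg * cg)⁻¹ * A) = 1 := by
      rw [MonoidHom.map_mul, MonoidHom.map_inv, MonoidHom.map_mul, red_cg, h, sq, inv_mul_cancel]
    have hcgSL1 : cg ∈ SL2Z2 := comm_mem_SL2 _ _
    have hcgSL : cg * cg ∈ SL2Z2 := Subgroup.mul_mem _ hcgSL1 hcgSL1
    have h3 := key_lemma ((cg * cg)⁻¹ * A) (Subgroup.mul_mem _ (Subgroup.inv_mem _ hcgSL) hdet) h2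
    have hcgm : cg ∈ commGL2Z2 := mem_comm_of_comm (E12 1) (E21 1)
    have hA := Subgroup.mul_mem _ (Subgroup.mul_mem _ hcgm hcgm) h3
    rwa [mul_inv_cancel_left] at hA

-- topology
lemma isClosed_fiber (c : ZMod 2) : IsClosed {y : ℤ_[2] | PadicInt.toZMod y = c} := by
  have key0 : IsClosed {y : ℤ_[2] | PadicInt.toZMod y = 0} := by
    have hset : {y : ℤ_[2] | PadicInt.toZMod y = 0} = {y : ℤ_[2] | ‖y‖ ≤ (2:ℝ) ^ (-(1:ℕ) : ℤ)} := by
      ext y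
      rw [Set.mem_setOf_eq, Set.mem_setOf_eq, toZMod_eq_zero_iff_dvd,
        show ((2:ℝ) ^ (-(1:ℕ) : ℤ)) = (2:ℕ) ^ (-(1:ℕ) : ℤ) by norm_num,
        PadicInt.norm_le_pow_iff_mem_span_pow, Ideal.mem_span_singleton, pow_one]
      norm_num
    rw [hset]
    exact isClosed_le continuous_norm continuous_const
  have hcase : c = 0 ∨ c = 1 := by revert c; decide
  rcases hcase with rfl | rfl
  · exact key0
  · have hset : {y : ℤ_[2] | PadicInt.toZMod y = 1} =
        (fun y : ℤ_[2] => y - 1) ⁻¹' {y : ℤ_[2] | PadicInt.toZMod y = 0} := by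
      ext y
      simp only [Set.mem_setOf_eq, Set.mem_preimage, _root_.map_sub, _root_.map_one, sub_eq_zero]
    rw [hset]
    exact key0.preimage (continuous_id.sub continuous_const)

lemma continuous_entry (i j : Fin 2) :
    Continuous fun A : GL (Fin 2) ℤ_[2] => (A : Matrix (Fin 2) (Fin 2) ℤ_[2]) i j :=
  Units.continuous_val.matrix_elem i j

lemma isClosed_red_fiber (B : GL (Fin 2) (ZMod 2)) :
    IsClosed {A : GL (Fin 2) ℤ_[2] | redGL A = B} := by
  have hset : {A : GL (Fin 2) ℤ_[2] | redGL A = B} =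
      ⋂ i : Fin 2, ⋂ j : Fin 2,
        (fun A : GL (Fin 2) ℤ_[2] => (A : Matrix (Fin 2) (Fin 2) ℤ_[2]) i j) ⁻¹'
          {y : ℤ_[2] | PadicInt.toZMod y = (B : Matrix (Fin 2) (Fin 2) (ZMod 2)) i j} := by
    ext A
    simp only [Set.mem_setOf_eq, Set.mem_iInter, Set.mem_preimage, Units.ext_iff]
    rw [← Matrix.ext_iff]
    constructor
    · intro h i j; rw [← h]; rfl
    · intro h i j
      have := h i j
      simpa [Matrix.GeneralLinearGroup.map, RingHom.mapMatrix_apply, Matrix.map_apply] using this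
  rw [hset]
  exact isClosed_iInter fun i => isClosed_iInter fun j =>
    (isClosed_fiber _).preimage (continuous_entry i j)

lemma isClosed_inf : IsClosed ((SL2Z2 ⊓ NN : Subgroup (GL (Fin 2) ℤ_[2])) : Set (GL (Fin 2) ℤ_[2])) := by
  have h1 : (SL2Z2 : Set (GL (Fin 2) ℤ_[2])) =
      (fun A : GL (Fin 2) ℤ_[2] => (A : Matrix (Fin 2) (Fin 2) ℤ_[2]).det) ⁻¹' {1} := by
    ext A
    simp only [SetLike.mem_coe, Set.mem_preimage, Set.mem_singleton_iff]
    rw [show (A ∈ SL2Z2 ↔ Matrix.GeneralLinearGroup.det A = 1) from Iff.rfl, Units.ext_iff,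
      Matrix.GeneralLinearGroup.val_det_apply, Units.val_one]
  have h2 : (NN : Set (GL (Fin 2) ℤ_[2])) =
      {A : GL (Fin 2) ℤ_[2] | redGL A = 1} ∪
        ({A : GL (Fin 2) ℤ_[2] | redGL A = r2} ∪ {A : GL (Fin 2) ℤ_[2] | redGL A = r2 ^ 2}) := by
    ext A
    simp only [SetLike.mem_coe, Set.mem_union, Set.mem_setOf_eq]
    exact mem_A3_iff (redGL A)
  rw [Subgroup.coe_inf, h1, h2]
  exact IsClosed.inter
    (IsClosed.preimage (Continuous.matrix_det Units.continuous_val) isClosed_singleton)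
    ((isClosed_red_fiber 1).union ((isClosed_red_fiber r2).union (isClosed_red_fiber (r2 ^ 2))))

lemma comm_le : commGL2Z2 ≤ SL2Z2 ⊓ NN := by
  apply Subgroup.topologicalClosure_minimal
  · rw [commutator_def]
    refine Subgroup.commutator_le.mpr fun g _ h _ => ⟨comm_mem_SL2 g h, ?_⟩
    show redGL ⁅g, h⁆ ∈ A3
    rw [map_commutatorElement]
    exact comm_mem_A3 _ _
  · exact isClosed_inf

lemma comm_eq : commGL2Z2 = SL2Z2 ⊓ NN := le_antisymm comm_le ge_lemma

end Aux3

/-- The commutator subgroup of `GL₂(ℤ₂)` is an index 2 subgroup of `SL₂(ℤ₂)`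
that contains every matrix `A ∈ SL₂(ℤ₂)` with `A ≡ I (mod 2)`. -/
theorem commutator_GL2_Z2 :
    commGL2Z2 ≤ SL2Z2 ∧
    commGL2Z2.relIndex SL2Z2 = 2 ∧
    ∀ A : GL (Fin 2) ℤ_[2], A ∈ SL2Z2 →
      Matrix.GeneralLinearGroup.map (PadicInt.toZMod : ℤ_[2] →+* ZMod 2) A = 1 →
      A ∈ commGL2Z2 := by
  refine ⟨comm_eq ▸ inf_le_left, ?_, fun A hA h1 => key_lemma A hA h1⟩
  have hEsl : E12 1 ∈ SL2Z2 := by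
    show Matrix.GeneralLinearGroup.det (E12 1) = 1
    apply Units.ext
    rw [Matrix.GeneralLinearGroup.val_det_apply, Units.val_one]
    simp [E12, Matrix.det_fin_two]
  show (commGL2Z2.subgroupOf SL2Z2).index = 2
  rw [Subgroup.index_eq_two_iff]
  refine ⟨⟨E12 1, hEsl⟩, fun b => ?_⟩
  have hmem : ∀ x : SL2Z2, (x ∈ commGL2Z2.subgroupOf SL2Z2 ↔ redGL (x : GL (Fin 2) ℤ_[2]) ∈ A3) := by
    intro x
    rw [Subgroup.mem_subgroupOf, comm_eq, Subgroup.mem_inf]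
    simp [x.2, NN, Subgroup.mem_comap]
  rw [hmem, hmem]
  have hco : redGL ((↑(b * ⟨E12 1, hEsl⟩) : GL (Fin 2) ℤ_[2])) = redGL ↑b * e12' := by
    rw [Subgroup.coe_mul, MonoidHom.map_mul, redE12]
  rw [hco, mem_A3_iff, mem_A3_iff]
  exact xor_A3 (redGL ↑b)
end Aux2
end

section
/- For any integer N > 1, there is no proper subgroup H of SL₂(ℤ/Nℤ) satisfying {±1}·H = SL₂(ℤ/Nℤ), i.e., such that every element of SL₂(ℤ/Nℤ) is of the form ±h with h ∈ H. -/
open Matrix MatrixGroups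

instance : Fact (Even (Fintype.card (Fin 2))) := ⟨by decide⟩

/-- For any integer `N > 1`, there is no proper subgroup `H` of `SL₂(ℤ/Nℤ)`
satisfying `{±1}·H = SL₂(ℤ/Nℤ)`, i.e. such that every element of `SL₂(ℤ/Nℤ)` is of the form
`±h` with `h ∈ H`. -/
theorem no_proper_subgroup_with_pmH_eq_SL2 (N : ℕ) (hN : 1 < N)
    (H : Subgroup (SL(2, ZMod N)))
    (hH : ∀ g : SL(2, ZMod N), g ∈ H ∨ -g ∈ H) :
    H = ⊤ := by
  have : NeZero N := ⟨by omega⟩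
  set S : SL(2, ZMod N) := ⟨!![0, -1; 1, 0], by simp [Matrix.det_fin_two_of]⟩ with hS
  have hS2 : S * S = -1 := by
    ext i j
    rw [Matrix.SpecialLinearGroup.coe_mul]
    fin_cases i <;> fin_cases j <;>
      simp [hS, Matrix.mul_apply, Fin.sum_univ_two]
  have hneg1 : (-1 : SL(2, ZMod N)) ∈ H := by
    rcases hH S with h | h
    · exact hS2 ▸ H.mul_mem h h
    · have : (-S) * (-S) = -1 := by rw [neg_mul_neg, hS2]
      exact this ▸ H.mul_mem h h
  ext g
  simp only [Subgroup.mem_top, iff_true]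
  rcases hH g with h | h
  · exact h
  · have := H.mul_mem hneg1 h
    simpa using this
end

section
/- Let G be an open subgroup of GL₂(ẑ) (or of SL₂(ẑ)), where ẑ is the profinite completion of ℤ. Then the commutator subgroup [G,G] is an open subgroup of SL₂(ẑ). -/
open Matrix
open scoped commutatorElement

instance (p : Nat.Primes) : Fact (Nat.Prime p) := ⟨p.2⟩

/-- The profinite completion `ẑ` of `ℤ`, realized as `∏_p ℤ_p`. -/
abbrev Zhat : Type := (p : Nat.Primes) → ℤ_[p]

/-- The subgroup `SL₂(ẑ)` of `GL₂(ẑ)`, realized as the kernel of the determinant. -/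
noncomputable def SL2hat : Subgroup (GL (Fin 2) Zhat) :=
  (Matrix.GeneralLinearGroup.det : GL (Fin 2) Zhat →* Zhatˣ).ker

section Mat
variable {R : Type*} [CommRing R]

/-- elementary matrix 1 + x E₀₁ as a unit -/
def Em12 (x : R) : GL (Fin 2) R :=
  ⟨!![1, x; 0, 1], !![1, -x; 0, 1],
    by rw [Matrix.mul_fin_two]; norm_num; exact Matrix.one_fin_two.symm,
    by rw [Matrix.mul_fin_two]; norm_num; exact Matrix.one_fin_two.symm⟩

def Em21 (x : R) : GL (Fin 2) R :=
  ⟨!![1, 0; x, 1], !![1, 0; -x, 1],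
    by rw [Matrix.mul_fin_two]; norm_num; exact Matrix.one_fin_two.symm,
    by rw [Matrix.mul_fin_two]; norm_num; exact Matrix.one_fin_two.symm⟩

def Dm (u : Rˣ) : GL (Fin 2) R :=
  ⟨!![(u:R), 0; 0, (↑u⁻¹:R)], !![(↑u⁻¹:R), 0; 0, (u:R)],
    by rw [Matrix.mul_fin_two]; norm_num; exact Matrix.one_fin_two.symm,
    by rw [Matrix.mul_fin_two]; norm_num; exact Matrix.one_fin_two.symm⟩

lemma Em12_val (x : R) : (Em12 x).val = !![1, x; 0, 1] := rfl
lemma Em21_val (x : R) : (Em21 x).val = !![1, 0; x, 1] := rfl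
lemma Dm_val (u : Rˣ) : (Dm u).val = !![(u:R), 0; 0, (↑u⁻¹:R)] := rfl
lemma Em12_inv_val (x : R) : ((Em12 x)⁻¹).val = !![1, -x; 0, 1] := rfl
lemma Em21_inv_val (x : R) : ((Em21 x)⁻¹).val = !![1, 0; -x, 1] := rfl
lemma Dm_inv_val (u : Rˣ) : ((Dm u)⁻¹).val = !![(↑u⁻¹:R), 0; 0, (u:R)] := rfl

lemma comm_Dm_Em12 (u : Rˣ) (y : R) : ⁅Dm u, Em12 y⁆ = Em12 (((u:R)^2 - 1) * y) := by
  have hu : (u:R) * (↑u⁻¹:R) = 1 := u.mul_inv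
  apply Units.ext
  rw [commutatorElement_def]
  simp only [Units.val_mul, Em12_val, Dm_val, Em12_inv_val, Dm_inv_val, Matrix.mul_fin_two]
  ext i j
  fin_cases i <;> fin_cases j <;> simp <;> try ring

lemma comm_Dm_Em21 (u : Rˣ) (y : R) : ⁅Dm u, Em21 y⁆ = Em21 (((↑u⁻¹:R)^2 - 1) * y) := by
  have hu : (u:R) * (↑u⁻¹:R) = 1 := u.mul_inv
  apply Units.ext
  rw [commutatorElement_def]
  simp only [Units.val_mul, Em21_val, Dm_val, Em21_inv_val, Dm_inv_val, Matrix.mul_fin_two]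
  ext i j
  fin_cases i <;> fin_cases j <;> simp <;> try ring

lemma whitehead (w : Rˣ) (b c : R) (hbc : b * c = (w:R) - 1) :
    Dm w = Em21 (-(c * (↑w⁻¹:R))) * Em12 b * Em21 c * Em12 (-(b * (↑w⁻¹:R))) := by
  have hu : (w:R) * (↑w⁻¹:R) = 1 := w.mul_inv
  apply Units.ext
  simp only [Units.val_mul, Em21_val, Em12_val, Dm_val, Matrix.mul_fin_two]
  ext i j
  fin_cases i <;> fin_cases j <;> simp <;>
    first
      | linear_combination (-1 : R)*hbc
      | linear_combination b*hu + b*(↑w⁻¹:R)*hbc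
      | linear_combination c*hu + c*(↑w⁻¹:R)*hbc
      | linear_combination (2*(↑w⁻¹:R) - (↑w⁻¹:R)^2 - (↑w⁻¹:R)^2*(b*c + (w:R) - 1))*hbc + ((↑w⁻¹:R) - (w:R)*(↑w⁻¹:R) + 1)*hu

lemma ldu (g : GL (Fin 2) R) (lam : R) (w : Rˣ)
    (hw : (w:R) = g.val 0 0 + lam * g.val 1 0)
    (hdet : g.val 0 0 * g.val 1 1 - g.val 0 1 * g.val 1 0 = 1) :
    g = Em12 (-lam) * Em21 (g.val 1 0 * (↑w⁻¹:R)) * Dm w *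
        Em12 ((g.val 0 1 + lam * g.val 1 1) * (↑w⁻¹:R)) := by
  have hu : (w:R) * (↑w⁻¹:R) = 1 := w.mul_inv
  set a := g.val 0 0
  set b' := g.val 0 1
  set c' := g.val 1 0
  set d' := g.val 1 1
  apply Units.ext
  simp only [Units.val_mul, Em21_val, Em12_val, Dm_val]
  rw [Matrix.eta_fin_two g.val]
  change !![a, b'; c', d'] = _
  simp only [Matrix.mul_fin_two]
  ext i j
  fin_cases i <;> fin_cases j <;> simp <;>
    first
      | linear_combination hw - lam*c'*hu
      | linear_combination c'*hu
      | linear_combination -hw + lam*c'*hu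
      | linear_combination -c'*hu
      | linear_combination ((b'+lam*d') - lam*c'*(↑w⁻¹:R)*(b'+lam*d') - lam*d')*hu + lam*(↑w⁻¹:R)*d'*hw + lam*(↑w⁻¹:R)*hdet
      | linear_combination (c'*(b'+lam*d')*(↑w⁻¹:R) + d')*hu - (↑w⁻¹:R)*hdet - (↑w⁻¹:R)*d'*hw
      | linear_combination -(((b'+lam*d') - lam*c'*(↑w⁻¹:R)*(b'+lam*d') - lam*d')*hu + lam*(↑w⁻¹:R)*d'*hw + lam*(↑w⁻¹:R)*hdet)
      | linear_combination -((c'*(b'+lam*d')*(↑w⁻¹:R) + d')*hu - (↑w⁻¹:R)*hdet - (↑w⁻¹:R)*d'*hw)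
      | linear_combination -d'*hu + (↑w⁻¹:R)*hdet + (↑w⁻¹:R)*d'*hw

end Mat

section Padic
variable {p : ℕ} [hp : Fact p.Prime]

lemma not_isUnit_p : ¬ IsUnit (p:ℤ_[p]) := fun h => (mem_nonunits_iff.mp PadicInt.p_nonunit) h

lemma isUnit_of_not_dvd {z : ℤ_[p]} (h : ¬ (p:ℤ_[p]) ∣ z) : IsUnit z := by
  by_contra h'
  exact h (Ideal.mem_span_singleton.mp
    (by rw [← PadicInt.maximalIdeal_eq_span_p]
        exact (IsLocalRing.mem_maximalIdeal z).mpr (mem_nonunits_iff.mpr h')))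

lemma dvd_p_of_not_isUnit {z : ℤ_[p]} (h : ¬ IsUnit z) : (p:ℤ_[p]) ∣ z := by
  have := (IsLocalRing.mem_maximalIdeal z).mpr (mem_nonunits_iff.mpr h)
  rwa [PadicInt.maximalIdeal_eq_span_p, Ideal.mem_span_singleton] at this

lemma isUnit_of_p_dvd_sub_one {z : ℤ_[p]} (h : (p:ℤ_[p]) ∣ z - 1) : IsUnit z := by
  refine isUnit_of_not_dvd fun h' => not_isUnit_p (p := p) (isUnit_of_dvd_one ?_)
  have : (p:ℤ_[p]) ∣ z - (z - 1) := dvd_sub h' h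
  simpa using this

lemma isUnit_one_add_pow {n : ℕ} (hn : 1 ≤ n) : IsUnit (1 + (p:ℤ_[p])^n) := by
  refine isUnit_of_p_dvd_sub_one ?_
  simpa using dvd_pow_self (p:ℤ_[p]) (Nat.one_le_iff_ne_zero.mp hn)

lemma not_dvd_two (hne : p ≠ 2) : ¬ (p:ℤ_[p]) ∣ 2 := by
  intro ⟨t, ht⟩
  have h2 : ((2:ℤ):ℤ_[p]) = (2:ℤ_[p]) := by norm_num
  have hlt : ‖((2:ℤ):ℤ_[p])‖ < 1 := by
    rw [h2, ht]
    calc ‖(p:ℤ_[p]) * t‖ = ‖(p:ℤ_[p])‖ * ‖t‖ := norm_mul _ _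
    _ ≤ ‖(p:ℤ_[p])‖ * 1 := by gcongr; exact PadicInt.norm_le_one t
    _ < 1 := by
        rw [mul_one, PadicInt.norm_p]
        rw [inv_lt_one_iff₀]
        right
        exact_mod_cast hp.1.one_lt
  have := (PadicInt.norm_int_lt_one_iff_dvd 2).mp hlt
  have h2' : p ∣ 2 := by exact_mod_cast this
  exact hne ((Nat.prime_dvd_prime_iff_eq hp.1 Nat.prime_two).mp h2')

lemma not_dvd_three (hne : p ≠ 3) : ¬ (p:ℤ_[p]) ∣ 3 := by
  intro ⟨t, ht⟩
  have h2 : ((3:ℤ):ℤ_[p]) = (3:ℤ_[p]) := by norm_num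
  have hlt : ‖((3:ℤ):ℤ_[p])‖ < 1 := by
    rw [h2, ht]
    calc ‖(p:ℤ_[p]) * t‖ = ‖(p:ℤ_[p])‖ * ‖t‖ := norm_mul _ _
    _ ≤ ‖(p:ℤ_[p])‖ * 1 := by gcongr; exact PadicInt.norm_le_one t
    _ < 1 := by
        rw [mul_one, PadicInt.norm_p]
        rw [inv_lt_one_iff₀]
        right
        exact_mod_cast hp.1.one_lt
  have := (PadicInt.norm_int_lt_one_iff_dvd 3).mp hlt
  have h2' : p ∣ 3 := by exact_mod_cast this
  exact hne ((Nat.prime_dvd_prime_iff_eq hp.1 Nat.prime_three).mp h2')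

lemma s_dvd_p_sq {n : ℕ} (hn : 1 ≤ n) : (2 + (p:ℤ_[p])^n) ∣ (p:ℤ_[p])^2 := by
  by_cases hp2 : p = 2
  · subst hp2
    rcases Nat.lt_or_ge n 2 with h | h
    · interval_cases n
      · norm_num
    · have h1 : 1 ≤ n - 1 := by omega
      have hu := isUnit_one_add_pow (p := 2) h1
      have hrw : (2 + (2:ℤ_[2])^n) = 2 * (1 + (2:ℤ_[2])^(n-1)) := by
        have : n = (n-1) + 1 := by omega
        rw [this]
        push_cast
        ring
      have : ((2:ℕ):ℤ_[2]) = (2:ℤ_[2]) := by norm_num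
      rw [this, hrw]
      have h4 : ((2:ℤ_[2]))^2 = 2 * 2 := by norm_num
      rw [h4]
      exact mul_dvd_mul_left 2 hu.dvd
  · refine IsUnit.dvd ?_
    refine isUnit_of_not_dvd fun h' => not_dvd_two hp2 ?_
    have : (p:ℤ_[p]) ∣ (2 + (p:ℤ_[p])^n) - (p:ℤ_[p])^n :=
      dvd_sub h' (dvd_pow_self _ (Nat.one_le_iff_ne_zero.mp hn))
    simpa using this

lemma p_pow_div_lemma {n : ℕ} (hn : 1 ≤ n) {x : ℤ_[p]} (h : (p:ℤ_[p])^(2*n+2) ∣ x) :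
    ∃ y, (p:ℤ_[p])^n ∣ y ∧ ((1+(p:ℤ_[p])^n)^2 - 1) * y = x := by
  obtain ⟨m, hm⟩ := h
  obtain ⟨r, hr⟩ := s_dvd_p_sq (p := p) hn
  refine ⟨(p:ℤ_[p])^n * (r*m), dvd_mul_right _ _, ?_⟩
  rw [hm]
  have key : ((1+(p:ℤ_[p])^n)^2 - 1) = (p:ℤ_[p])^n * (2 + (p:ℤ_[p])^n) := by ring
  rw [key]
  calc (p:ℤ_[p])^n * (2 + (p:ℤ_[p])^n) * ((p:ℤ_[p])^n * (r*m))
      = ((p:ℤ_[p])^n * (p:ℤ_[p])^n) * (((2 + (p:ℤ_[p])^n) * r) * m) := by ring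
    _ = ((p:ℤ_[p])^n * (p:ℤ_[p])^n) * ((p:ℤ_[p])^2 * m) := by rw [← hr]
    _ = (p:ℤ_[p])^(2*n+2) * m := by rw [← pow_add]; ring_nf

lemma p_ne_zero' : (p:ℤ_[p]) ≠ 0 := by
  intro h
  have hnorm := PadicInt.norm_p (p := p)
  rw [h, norm_zero] at hnorm
  have hp0 : (0:ℝ) < (p:ℝ) := by exact_mod_cast hp.1.pos
  have := inv_pos.mpr hp0
  rw [← hnorm] at this
  exact lt_irrefl 0 this

end Padic

lemma isUnit_pi {x : Zhat} (h : ∀ p, IsUnit (x p)) : IsUnit x := by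
  refine ⟨⟨x, fun p => ↑(h p).unit⁻¹, funext fun p => ?_, funext fun p => ?_⟩, rfl⟩
  · exact (h p).mul_val_inv
  · exact (h p).val_inv_mul

def Ptwo : Nat.Primes := ⟨2, Nat.prime_two⟩
def Pthree : Nat.Primes := ⟨3, Nat.prime_three⟩

section Setup
variable (S : Finset Nat.Primes) (n : ℕ)

noncomputable def uval : Zhat := fun p => if p ∈ S then 1 + ((p:ℕ):ℤ_[p])^n else 2

lemma isUnit_uval (hn : 1 ≤ n) (h2 : Ptwo ∈ S) : IsUnit (uval S n) := by
  refine isUnit_pi fun p => ?_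
  by_cases hp : p ∈ S
  · simpa [uval, hp] using isUnit_one_add_pow (p := (p:ℕ)) hn
  · have hp2 : (p:ℕ) ≠ 2 := by
      intro h
      exact hp (by rwa [show p = Ptwo from Subtype.ext h])
    simpa [uval, hp] using isUnit_of_not_dvd (not_dvd_two hp2)

noncomputable def uU (hn : 1 ≤ n) (h2 : Ptwo ∈ S) : Zhatˣ := (isUnit_uval S n hn h2).unit

lemma uU_val (hn : 1 ≤ n) (h2 : Ptwo ∈ S) : ((uU S n hn h2 : Zhatˣ) : Zhat) = uval S n :=
  (isUnit_uval S n hn h2).unit_spec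

lemma global_div (hn : 1 ≤ n) (h2 : Ptwo ∈ S) (h3 : Pthree ∈ S) (x : Zhat)
    (hx : ∀ p ∈ S, ((p:ℕ):ℤ_[p])^(2*n+2) ∣ x p) :
    ∃ y : Zhat, (((uU S n hn h2 : Zhatˣ) : Zhat)^2 - 1) * y = x ∧
      ∀ p ∈ S, ((p:ℕ):ℤ_[p])^n ∣ y p := by
  have hch : ∀ p : Nat.Primes, ∃ yp : ℤ_[p],
      ((uval S n p)^2 - 1) * yp = x p ∧ (p ∈ S → ((p:ℕ):ℤ_[p])^n ∣ yp) := by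
    intro p
    by_cases hp : p ∈ S
    · obtain ⟨y, hdvd, heq⟩ := p_pow_div_lemma (p := (p:ℕ)) hn (hx p hp)
      exact ⟨y, by simp only [uval, if_pos hp]; exact heq, fun _ => hdvd⟩
    · have hp3 : (p:ℕ) ≠ 3 := by
        intro h
        exact hp (by rwa [show p = Pthree from Subtype.ext h])
      have h3u : IsUnit (3:ℤ_[p]) := isUnit_of_not_dvd (not_dvd_three hp3)
      obtain ⟨w, hw⟩ := h3u
      refine ⟨(↑w⁻¹ : ℤ_[p]) * x p, ?_, fun hmem => absurd hmem hp⟩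
      have : (uval S n p)^2 - 1 = 3 := by simp only [uval, if_neg hp]; norm_num
      rw [this, ← hw, ← mul_assoc, Units.mul_inv, one_mul]
  choose y hy1 hy2 using hch
  refine ⟨y, funext fun p => ?_, fun p hp => hy2 p hp⟩
  have h' := hy1 p
  simp only [Pi.mul_apply, Pi.sub_apply, Pi.pow_apply, Pi.one_apply, uU_val]
  exact h'

end Setup

lemma dvd_of_mem_ball {p : ℕ} [hp : Fact p.Prime] {M : ℕ} {z : ℤ_[p]}
    (h : (p:ℤ_[p])^M ∣ z) : ‖z‖ ≤ (p:ℝ)^(-(M:ℤ)) := by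
  rw [PadicInt.norm_le_pow_iff_mem_span_pow, Ideal.mem_span_singleton]
  exact h

lemma mem_ball_of_dvd {p : ℕ} [hp : Fact p.Prime] {M : ℕ} {c z : ℤ_[p]}
    (h : (p:ℤ_[p])^M ∣ (z - c)) : z ∈ Metric.ball c ((p:ℝ)^(-(M:ℤ)+1)) := by
  rw [Metric.mem_ball, dist_eq_norm]
  rw [← PadicInt.norm_le_pow_iff_norm_lt_pow_add_one]
  exact dvd_of_mem_ball h

lemma dvd_of_mem_ball' {p : ℕ} [hp : Fact p.Prime] {M : ℕ} {c z : ℤ_[p]}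
    (h : z ∈ Metric.ball c ((p:ℝ)^(-(M:ℤ)+1))) : (p:ℤ_[p])^M ∣ (z - c) := by
  rw [Metric.mem_ball, dist_eq_norm, ← PadicInt.norm_le_pow_iff_norm_lt_pow_add_one,
    PadicInt.norm_le_pow_iff_mem_span_pow, Ideal.mem_span_singleton] at h
  exact h

lemma zhat_nhds (c : Zhat) (V : Set Zhat) (hV : V ∈ nhds c) :
    ∃ (S : Finset Nat.Primes) (M : ℕ),
      ∀ z : Zhat, (∀ p ∈ S, ((p:ℕ):ℤ_[p])^M ∣ (z p - c p)) → z ∈ V := by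
  rw [nhds_pi, Filter.mem_pi] at hV
  obtain ⟨I, hIf, t, ht, hsub⟩ := hV
  have key : ∀ p : Nat.Primes, ∃ m : ℕ,
      ∀ z : ℤ_[p], ((p:ℕ):ℤ_[p])^m ∣ (z - c p) → z ∈ t p := by
    intro p
    obtain ⟨ε, hε, hball⟩ := Metric.mem_nhds_iff.mp (ht p)
    have hplt : (((p:ℕ):ℝ))⁻¹ < 1 := by
      rw [inv_lt_one_iff₀]
      right
      exact_mod_cast p.2.one_lt
    obtain ⟨m, hm⟩ := exists_pow_lt_of_lt_one hε hplt
    refine ⟨m, fun z hz => hball ?_⟩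
    rw [Metric.mem_ball, dist_eq_norm]
    calc ‖z - c p‖ ≤ ((p:ℕ):ℝ)^(-(m:ℤ)) := dvd_of_mem_ball hz
      _ = (((p:ℕ):ℝ))⁻¹^m := by
          rw [inv_pow, ← zpow_natCast (((p:ℕ):ℝ)), ← _root_.zpow_neg]
      _ < ε := hm
  choose m hm using key
  refine ⟨hIf.toFinset, hIf.toFinset.sup m, fun z hz => hsub ?_⟩
  intro p hpI
  have hpS : p ∈ hIf.toFinset := hIf.mem_toFinset.mpr hpI
  exact hm p (z p) (dvd_trans (pow_dvd_pow _ (Finset.le_sup hpS)) (hz p hpS))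

lemma row_nhds (c : Fin 2 → Zhat) (V : Set (Fin 2 → Zhat)) (hV : V ∈ nhds c) :
    ∃ (S : Finset Nat.Primes) (M : ℕ),
      ∀ z : Fin 2 → Zhat, (∀ p ∈ S, ∀ j, ((p:ℕ):ℤ_[p])^M ∣ (z j p - c j p)) → z ∈ V := by
  rw [nhds_pi, Filter.mem_pi] at hV
  obtain ⟨I, hIf, t, ht, hsub⟩ := hV
  choose Sf Mf hf using fun j => zhat_nhds (c j) (t j) (ht j)
  refine ⟨Sf 0 ∪ Sf 1, max (Mf 0) (Mf 1), fun z hz => hsub ?_⟩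
  intro j _
  have hj : Sf j ⊆ Sf 0 ∪ Sf 1 := by
    fin_cases j
    · exact Finset.subset_union_left
    · exact Finset.subset_union_right
  have hMj : Mf j ≤ max (Mf 0) (Mf 1) := by
    fin_cases j
    · exact le_max_left _ _
    · exact le_max_right _ _
  exact hf j (z j) fun p hp =>
    dvd_trans (pow_dvd_pow _ hMj) (hz p (hj hp) j)

lemma mat_nhds (A : Matrix (Fin 2) (Fin 2) Zhat) (V : Set (Matrix (Fin 2) (Fin 2) Zhat))
    (hV : V ∈ nhds A) :
    ∃ (S : Finset Nat.Primes) (M : ℕ),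
      ∀ B : Matrix (Fin 2) (Fin 2) Zhat,
        (∀ p ∈ S, ∀ i j, ((p:ℕ):ℤ_[p])^M ∣ (B i j - A i j) p) → B ∈ V := by
  have hV' : V ∈ Filter.pi (fun i => nhds (A i)) := by
    have := @nhds_pi (Fin 2) (fun _ => Fin 2 → Zhat) _ A
    exact this ▸ hV
  obtain ⟨I, hIf, t, ht, hsub⟩ := Filter.mem_pi.mp hV'
  choose Sf Mf hf using fun i => row_nhds (A i) (t i) (ht i)
  refine ⟨Sf 0 ∪ Sf 1, max (Mf 0) (Mf 1), fun B hB => hsub ?_⟩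
  intro i _
  have hi : Sf i ⊆ Sf 0 ∪ Sf 1 := by
    fin_cases i
    · exact Finset.subset_union_left
    · exact Finset.subset_union_right
  have hMi : Mf i ≤ max (Mf 0) (Mf 1) := by
    fin_cases i
    · exact le_max_left _ _
    · exact le_max_right _ _
  exact hf i (B i) fun p hp j =>
    dvd_trans (pow_dvd_pow _ hMi) (hB p (hi hp) i j)

lemma inv_cong (x : GL (Fin 2) Zhat) (S : Finset Nat.Primes) (M : ℕ)
    (h : ∀ p ∈ S, ∀ i j, ((p:ℕ):ℤ_[p])^M ∣ (x.val i j - (1:Matrix (Fin 2) (Fin 2) Zhat) i j) p) :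
    ∀ p ∈ S, ∀ i j, ((p:ℕ):ℤ_[p])^M ∣
      ((x⁻¹).val i j - (1:Matrix (Fin 2) (Fin 2) Zhat) i j) p := by
  have hinv : (x⁻¹).val * x.val = 1 := by
    rw [← Units.val_mul, inv_mul_cancel, Units.val_one]
  have hkey : (x⁻¹).val - 1 = (x⁻¹).val * (1 - x.val) := by
    rw [mul_sub, mul_one, hinv]
  intro p hp i j
  have hterm : ∀ k : Fin 2, ((p:ℕ):ℤ_[p])^M ∣ (((1:Matrix (Fin 2) (Fin 2) Zhat) - x.val) k j) p := by
    intro k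
    have h1 := h p hp k j
    have : (((1:Matrix (Fin 2) (Fin 2) Zhat) - x.val) k j) p
        = -((x.val k j - (1:Matrix (Fin 2) (Fin 2) Zhat) k j) p) := by
      simp [Matrix.sub_apply, Pi.sub_apply]
    rw [this]
    exact h1.neg_right
  have hentry : ((x⁻¹).val i j - (1:Matrix (Fin 2) (Fin 2) Zhat) i j) p
      = ((x⁻¹).val i 0 * ((1:Matrix (Fin 2) (Fin 2) Zhat) - x.val) 0 j) p
        + ((x⁻¹).val i 1 * ((1:Matrix (Fin 2) (Fin 2) Zhat) - x.val) 1 j) p := by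
    have := congrFun (congrFun hkey i) j
    rw [Matrix.sub_apply] at this
    rw [this, Matrix.mul_apply, Fin.sum_univ_two, Pi.add_apply]
  rw [hentry]
  exact dvd_add ((hterm 0).mul_left _) ((hterm 1).mul_left _)

lemma gl_nhds {O : Set (GL (Fin 2) Zhat)} (hO : IsOpen O) (h1 : (1 : GL (Fin 2) Zhat) ∈ O) :
    ∃ (S : Finset Nat.Primes) (M : ℕ), 1 ≤ M ∧
      ∀ x : GL (Fin 2) Zhat,
        (∀ p ∈ S, ∀ i j, ((p:ℕ):ℤ_[p])^M ∣ (x.val i j - (1:Matrix (Fin 2) (Fin 2) Zhat) i j) p) →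
          x ∈ O := by
  obtain ⟨W, hWopen, hWpre⟩ :=
    (Units.isEmbedding_embedProduct (M := Matrix (Fin 2) (Fin 2) Zhat)).toIsInducing.isOpen_iff.mp hO
  have h1W : Units.embedProduct _ (1 : GL (Fin 2) Zhat) ∈ W := by
    rw [← hWpre] at h1; exact h1
  have hWnhds : W ∈ nhds (Units.embedProduct _ (1 : GL (Fin 2) Zhat)) := hWopen.mem_nhds h1W
  have hpt : Units.embedProduct (Matrix (Fin 2) (Fin 2) Zhat) (1 : GL (Fin 2) Zhat)
      = ((1 : Matrix (Fin 2) (Fin 2) Zhat), MulOpposite.op (1 : Matrix (Fin 2) (Fin 2) Zhat)) := by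
    simp [Units.embedProduct_apply]
  rw [hpt, nhds_prod_eq] at hWnhds
  obtain ⟨W1, hW1, W2, hW2, hsub⟩ := Filter.mem_prod_iff.mp hWnhds
  have hV2 : MulOpposite.op ⁻¹' W2 ∈ nhds (1 : Matrix (Fin 2) (Fin 2) Zhat) :=
    MulOpposite.continuous_op.continuousAt.preimage_mem_nhds hW2
  obtain ⟨S1, M1, hS1⟩ := mat_nhds 1 W1 hW1
  obtain ⟨S2, M2, hS2⟩ := mat_nhds 1 (MulOpposite.op ⁻¹' W2) hV2
  refine ⟨S1 ∪ S2, max M1 M2 + 1, by omega, fun x hx => ?_⟩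
  have hx1 : ∀ p ∈ S1, ∀ i j, ((p:ℕ):ℤ_[p])^M1 ∣
      (x.val i j - (1:Matrix (Fin 2) (Fin 2) Zhat) i j) p := fun p hp i j =>
    dvd_trans (pow_dvd_pow _ (by omega)) (hx p (Finset.mem_union_left _ hp) i j)
  have hxinv := inv_cong x (S1 ∪ S2) (max M1 M2 + 1) hx
  have hx2 : ∀ p ∈ S2, ∀ i j, ((p:ℕ):ℤ_[p])^M2 ∣
      ((x⁻¹).val i j - (1:Matrix (Fin 2) (Fin 2) Zhat) i j) p := fun p hp i j =>
    dvd_trans (pow_dvd_pow _ (by omega)) (hxinv p (Finset.mem_union_right _ hp) i j)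
  have hmem : Units.embedProduct _ x ∈ W := by
    apply hsub
    rw [Units.embedProduct_apply]
    constructor
    · exact hS1 _ hx1
    · show MulOpposite.op ((x⁻¹).val) ∈ W2
      exact hS2 _ hx2
  rw [← hWpre]
  exact hmem

section Core
variable (G : Subgroup (GL (Fin 2) Zhat)) (S : Finset Nat.Primes) (n : ℕ)
  (hn : 1 ≤ n) (h2 : Ptwo ∈ S) (h3 : Pthree ∈ S)
  (hH : ∀ x : GL (Fin 2) Zhat, (x.val).det = 1 →
    (∀ p ∈ S, ∀ i j, ((p:ℕ):ℤ_[p])^n ∣ (x.val i j - (1 : Matrix (Fin 2) (Fin 2) Zhat) i j) p) →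
      x ∈ G)

include hn h2 h3 hH

lemma Em12_mem (y : Zhat) (hy : ∀ p ∈ S, ((p:ℕ):ℤ_[p])^n ∣ y p) : Em12 y ∈ G := by
  refine hH _ (by rw [Em12_val]; simp [Matrix.det_fin_two_of]) ?_
  intro p hp i j
  fin_cases i <;> fin_cases j <;>
    simp [Em12_val, Matrix.one_apply, Pi.sub_apply] <;>
    first
      | exact dvd_zero _
      | exact hy p hp

lemma Em21_mem (y : Zhat) (hy : ∀ p ∈ S, ((p:ℕ):ℤ_[p])^n ∣ y p) : Em21 y ∈ G := by
  refine hH _ (by rw [Em21_val]; simp [Matrix.det_fin_two_of]) ?_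
  intro p hp i j
  fin_cases i <;> fin_cases j <;>
    simp [Em21_val, Matrix.one_apply, Pi.sub_apply] <;>
    first
      | exact dvd_zero _
      | exact hy p hp

lemma Dm_mem (v : Zhatˣ) (hv : ∀ p ∈ S, ((p:ℕ):ℤ_[p])^n ∣ ((v:Zhat) p - 1)) : Dm v ∈ G := by
  have hvinv : ∀ p ∈ S, ((p:ℕ):ℤ_[p])^n ∣ (((↑v⁻¹:Zhat)) p - 1) := by
    intro p hp
    have hrel : (v:Zhat) p * (↑v⁻¹:Zhat) p = 1 := by
      have := congrFun (Units.mul_inv v) p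
      simpa [Pi.mul_apply] using this
    have heq2 : (↑v⁻¹:Zhat) p - 1 = -((↑v⁻¹:Zhat) p * ((v:Zhat) p - 1)) := by
      linear_combination hrel
    rw [heq2]
    exact ((hv p hp).mul_left _).neg_right
  refine hH _ ?_ ?_
  · rw [Dm_val]
    simp [Matrix.det_fin_two_of]
  · intro p hp i j
    fin_cases i <;> fin_cases j <;>
      simp [Dm_val, Matrix.one_apply, Pi.sub_apply] <;>
      first
        | exact dvd_zero _
        | simpa [Pi.sub_apply, Pi.one_apply] using hv p hp
        | simpa [Pi.sub_apply, Pi.one_apply] using hvinv p hp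

lemma uU_cong : ∀ p ∈ S, ((p:ℕ):ℤ_[p])^n ∣ (((uU S n hn h2 : Zhatˣ) : Zhat) p - 1) := by
  intro p hp
  rw [uU_val]
  simp only [uval, if_pos hp]
  simpa using dvd_refl (((p:ℕ):ℤ_[p])^n)

lemma uUinv_cong : ∀ p ∈ S, ((p:ℕ):ℤ_[p])^n ∣ (((uU S n hn h2)⁻¹ : Zhatˣ) : Zhat) p - 1 := by
  intro p hp
  have hrel : ((uU S n hn h2 : Zhatˣ) : Zhat) p * (((uU S n hn h2)⁻¹ : Zhatˣ) : Zhat) p = 1 := by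
    have := congrFun (Units.mul_inv (uU S n hn h2)) p
    simpa [Pi.mul_apply] using this
  have heq : (((uU S n hn h2)⁻¹ : Zhatˣ) : Zhat) p - 1 =
      -((((uU S n hn h2)⁻¹ : Zhatˣ) : Zhat) p * (((uU S n hn h2 : Zhatˣ) : Zhat) p - 1)) := by
    linear_combination hrel
  rw [heq]
  exact ((uU_cong G S n hn h2 h3 hH p hp).mul_left _).neg_right

lemma Em12_comm_mem (x : Zhat) (hx : ∀ p ∈ S, ((p:ℕ):ℤ_[p])^(2*n+2) ∣ x p) :
    Em12 x ∈ ⁅G, G⁆ := by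
  obtain ⟨y, hyeq, hyd⟩ := global_div S n hn h2 h3 x hx
  have : Em12 x = ⁅Dm (uU S n hn h2), Em12 y⁆ := by rw [comm_Dm_Em12, hyeq]
  rw [this]
  exact Subgroup.commutator_mem_commutator
    (Dm_mem G S n hn h2 h3 hH _ (uU_cong G S n hn h2 h3 hH))
    (Em12_mem G S n hn h2 h3 hH y hyd)

lemma Em21_comm_mem (x : Zhat) (hx : ∀ p ∈ S, ((p:ℕ):ℤ_[p])^(2*n+2) ∣ x p) :
    Em21 x ∈ ⁅G, G⁆ := by
  obtain ⟨y, hyeq, hyd⟩ := global_div S n hn h2 h3 x hx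
  have : Em21 x = ⁅Dm (uU S n hn h2)⁻¹, Em21 y⁆ := by
    rw [comm_Dm_Em21]
    rw [inv_inv, hyeq]
  rw [this]
  exact Subgroup.commutator_mem_commutator
    (Dm_mem G S n hn h2 h3 hH _ (uUinv_cong G S n hn h2 h3 hH))
    (Em21_mem G S n hn h2 h3 hH y hyd)

theorem main_mem (g : GL (Fin 2) Zhat) (hdet : (g.val).det = 1)
    (hg : ∀ p ∈ S, ∀ i j, ((p:ℕ):ℤ_[p])^(6*n+6) ∣
      (g.val i j - (1 : Matrix (Fin 2) (Fin 2) Zhat) i j) p) :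
    g ∈ ⁅G, G⁆ := by
  classical
  have hdet2 : g.val 0 0 * g.val 1 1 - g.val 0 1 * g.val 1 0 = 1 := by
    rw [← Matrix.det_fin_two]; exact hdet
  have hdetp : ∀ p, g.val 0 0 p * g.val 1 1 p - g.val 0 1 p * g.val 1 0 p = 1 := by
    intro p
    have := congrFun hdet2 p
    simpa [Pi.sub_apply, Pi.mul_apply, Pi.one_apply] using this
  -- entrywise congruences from hg
  have hg00 : ∀ p ∈ S, ((p:ℕ):ℤ_[p])^(6*n+6) ∣ (g.val 0 0 p - 1) := by
    intro p hp
    have := hg p hp 0 0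
    simpa [Matrix.one_apply, Pi.sub_apply] using this
  have hg01 : ∀ p ∈ S, ((p:ℕ):ℤ_[p])^(6*n+6) ∣ g.val 0 1 p := by
    intro p hp
    have := hg p hp 0 1
    simpa [Matrix.one_apply, Pi.sub_apply] using this
  have hg10 : ∀ p ∈ S, ((p:ℕ):ℤ_[p])^(6*n+6) ∣ g.val 1 0 p := by
    intro p hp
    have := hg p hp 1 0
    simpa [Matrix.one_apply, Pi.sub_apply] using this
  set lam : Zhat := fun p => if IsUnit (g.val 0 0 p) then 0 else 1 with hlam
  have hlamS : ∀ p ∈ S, lam p = 0 := by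
    intro p hp
    have hu : IsUnit (g.val 0 0 p) := by
      refine isUnit_of_p_dvd_sub_one ?_
      exact dvd_trans (dvd_pow_self _ (by omega : 6*n+6 ≠ 0)) (hg00 p hp)
    simp [hlam, hu]
  have hwu : IsUnit (g.val 0 0 + lam * g.val 1 0) := by
    apply isUnit_pi
    intro p
    rw [Pi.add_apply, Pi.mul_apply]
    by_cases hu0 : IsUnit (g.val 0 0 p)
    · simpa [hlam, hu0] using hu0
    · have hl : lam p = 1 := by simp [hlam, hu0]
      rw [hl, one_mul]
      apply isUnit_of_not_dvd
      intro hdvd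
      have hd0 : ((p:ℕ):ℤ_[p]) ∣ g.val 0 0 p := dvd_p_of_not_isUnit hu0
      have hd1 : ((p:ℕ):ℤ_[p]) ∣ g.val 1 0 p := by
        have := dvd_sub hdvd hd0
        simpa using this
      have hone : ((p:ℕ):ℤ_[p]) ∣ 1 := by
        rw [← hdetp p]
        exact dvd_sub (hd0.mul_right _) (hd1.mul_left _)
      exact not_isUnit_p (isUnit_of_dvd_one hone)
  set w := hwu.unit with hwdef
  have hww : (w:Zhat) = g.val 0 0 + lam * g.val 1 0 := hwu.unit_spec
  have hwp : ∀ p ∈ S, ((p:ℕ):ℤ_[p])^(6*n+6) ∣ ((w:Zhat) p - 1) := by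
    intro p hp
    have : (w:Zhat) p = g.val 0 0 p + lam p * g.val 1 0 p := by
      rw [hww, Pi.add_apply, Pi.mul_apply]
    rw [this, hlamS p hp, zero_mul, add_zero]
    exact hg00 p hp
  set cc : Zhat := fun p => if p ∈ S then ((p:ℕ):ℤ_[p])^(2*n+2) else 1 with hccdef
  have hcdvd : ∀ p, cc p ∣ ((w:Zhat) - 1) p := by
    intro p
    rw [Pi.sub_apply, Pi.one_apply]
    by_cases hp : p ∈ S
    · simp only [hccdef, if_pos hp]
      exact dvd_trans (pow_dvd_pow _ (by omega : 2*n+2 ≤ 6*n+6)) (hwp p hp)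
    · simp only [hccdef, if_neg hp]
      exact one_dvd _
  choose bb hbb using hcdvd
  have hbc : (fun p => bb p) * cc = (w:Zhat) - 1 := by
    funext p
    rw [Pi.mul_apply]
    have := hbb p
    rw [Pi.sub_apply, Pi.one_apply] at this
    rw [mul_comm]
    rw [← this]
    rfl
  -- divisibility of bb
  have hbbd : ∀ p ∈ S, ((p:ℕ):ℤ_[p])^(2*n+2) ∣ bb p := by
    intro p hp
    obtain ⟨m, hm⟩ := hwp p hp
    have hcc : cc p = ((p:ℕ):ℤ_[p])^(2*n+2) := by simp only [hccdef, if_pos hp]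
    have heq : ((p:ℕ):ℤ_[p])^(2*n+2) * bb p =
        ((p:ℕ):ℤ_[p])^(2*n+2) * (((p:ℕ):ℤ_[p])^(4*n+4) * m) := by
      have h1 := hbb p
      rw [Pi.sub_apply, Pi.one_apply, hcc] at h1
      rw [← h1, hm]
      ring
    have hcancel := mul_left_cancel₀ (pow_ne_zero (2*n+2) (p_ne_zero' (p := (p:ℕ)))) heq
    rw [hcancel]
    exact Dvd.dvd.mul_right (pow_dvd_pow _ (by omega)) m
  -- decomposition
  have hldu := ldu g lam w hww hdet2
  have hwhite := whitehead w (fun p => bb p) cc hbc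
  rw [hwhite] at hldu
  rw [hldu]
  have h2n2 : ∀ x : Zhat, (∀ p ∈ S, ((p:ℕ):ℤ_[p])^(2*n+2) ∣ x p) → Em12 x ∈ ⁅G,G⁆ :=
    fun x hx => Em12_comm_mem G S n hn h2 h3 hH x hx
  have h2n2' : ∀ x : Zhat, (∀ p ∈ S, ((p:ℕ):ℤ_[p])^(2*n+2) ∣ x p) → Em21 x ∈ ⁅G,G⁆ :=
    fun x hx => Em21_comm_mem G S n hn h2 h3 hH x hx
  refine mul_mem (mul_mem (mul_mem (h2n2 _ ?_) (h2n2' _ ?_))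
    (mul_mem (mul_mem (mul_mem (h2n2' _ ?_) (h2n2 _ ?_)) (h2n2' _ ?_)) (h2n2 _ ?_))) (h2n2 _ ?_)
  · -- -lam
    intro p hp
    rw [Pi.neg_apply, hlamS p hp, neg_zero]
    exact dvd_zero _
  · -- g10 * w⁻¹
    intro p hp
    rw [Pi.mul_apply]
    exact (dvd_trans (pow_dvd_pow _ (by omega : 2*n+2 ≤ 6*n+6)) (hg10 p hp)).mul_right _
  · -- -(cc * w⁻¹)
    intro p hp
    rw [Pi.neg_apply, Pi.mul_apply]
    refine Dvd.dvd.neg_right ?_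
    have hcc : cc p = ((p:ℕ):ℤ_[p])^(2*n+2) := by simp only [hccdef, if_pos hp]
    rw [hcc]
    exact Dvd.dvd.mul_right dvd_rfl _
  · -- bb
    intro p hp
    exact hbbd p hp
  · -- cc
    intro p hp
    have hcc : cc p = ((p:ℕ):ℤ_[p])^(2*n+2) := by simp only [hccdef, if_pos hp]
    rw [hcc]
  · -- -(bb * w⁻¹)
    intro p hp
    rw [Pi.neg_apply, Pi.mul_apply]
    exact ((hbbd p hp).mul_right _).neg_right
  · -- (g01 + lam*g11) * w⁻¹
    intro p hp
    rw [Pi.mul_apply, Pi.add_apply, Pi.mul_apply, hlamS p hp, zero_mul, add_zero]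
    exact (dvd_trans (pow_dvd_pow _ (by omega : 2*n+2 ≤ 6*n+6)) (hg01 p hp)).mul_right _

end Core

-- ### Final assembly

lemma SL2hat_isClosed : IsClosed (SL2hat : Set (GL (Fin 2) Zhat)) := by
  have hcont : Continuous fun x : GL (Fin 2) Zhat => (x.val).det :=
    Units.continuous_val.matrix_det
  have hset : (SL2hat : Set (GL (Fin 2) Zhat))
      = (fun x : GL (Fin 2) Zhat => (x.val).det) ⁻¹' {1} := by
    ext x
    simp only [SetLike.mem_coe, SL2hat, MonoidHom.mem_ker, Set.mem_preimage,
      Set.mem_singleton_iff]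
    constructor
    · intro h
      rw [← Matrix.GeneralLinearGroup.val_det_apply, h, Units.val_one]
    · intro h
      ext
      rw [Matrix.GeneralLinearGroup.val_det_apply, h, Units.val_one]
  rw [hset]
  exact isClosed_singleton.preimage hcont

lemma commutator_le_SL2hat (G : Subgroup (GL (Fin 2) Zhat)) : ⁅G, G⁆ ≤ SL2hat := by
  rw [Subgroup.commutator_le]
  intro a _ b _
  show ⁅a, b⁆ ∈ (Matrix.GeneralLinearGroup.det : GL (Fin 2) Zhat →* Zhatˣ).ker
  rw [MonoidHom.mem_ker, map_commutatorElement]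
  exact commutatorElement_eq_one_iff_mul_comm.mpr (mul_comm _ _)

lemma det_val_of_mem_SL2hat {x : GL (Fin 2) Zhat} (hx : x ∈ SL2hat) : (x.val).det = 1 := by
  have hd : Matrix.GeneralLinearGroup.det x = 1 := hx
  rw [← Matrix.GeneralLinearGroup.val_det_apply, hd, Units.val_one]

/-- Let `G` be an open subgroup of `GL₂(ẑ)` (or of `SL₂(ẑ)`). Then the
(topological) commutator subgroup `[G,G]` is an open subgroup of `SL₂(ẑ)`. -/
theorem commutator_of_open_subgroup_isOpen_in_SL2
    (G : Subgroup (GL (Fin 2) Zhat))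
    (hG : IsOpen (G : Set (GL (Fin 2) Zhat)) ∨
      (G ≤ SL2hat ∧ IsOpen {x : SL2hat | (x : GL (Fin 2) Zhat) ∈ G})) :
    (⁅G, G⁆ : Subgroup (GL (Fin 2) Zhat)).topologicalClosure ≤ SL2hat ∧
      IsOpen {x : SL2hat |
        (x : GL (Fin 2) Zhat) ∈ (⁅G, G⁆ : Subgroup (GL (Fin 2) Zhat)).topologicalClosure} := by
  constructor
  · exact Subgroup.topologicalClosure_minimal _ (commutator_le_SL2hat G) SL2hat_isClosed
  -- Extract a congruence condition guaranteeing membership in G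
  have hext : ∃ (S : Finset Nat.Primes) (M : ℕ), 1 ≤ M ∧ Ptwo ∈ S ∧ Pthree ∈ S ∧
      ∀ x : GL (Fin 2) Zhat, (x.val).det = 1 →
        (∀ p ∈ S, ∀ i j, ((p:ℕ):ℤ_[p])^M ∣
          (x.val i j - (1 : Matrix (Fin 2) (Fin 2) Zhat) i j) p) → x ∈ G := by
    rcases hG with hopen | ⟨hle, hopen⟩
    · obtain ⟨S0, M, hM, hbasic⟩ := gl_nhds hopen (one_mem G)
      refine ⟨insert Ptwo (insert Pthree S0), M, hM, Finset.mem_insert_self _ _,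
        Finset.mem_insert_of_mem (Finset.mem_insert_self _ _), fun x _ hc => ?_⟩
      exact hbasic x fun p hp i j =>
        hc p (Finset.mem_insert_of_mem (Finset.mem_insert_of_mem hp)) i j
    · obtain ⟨O, hOopen, hOpre⟩ := isOpen_induced_iff.mp hopen
      have h1O : (1 : GL (Fin 2) Zhat) ∈ O := by
        have h1mem : ((1 : SL2hat) : GL (Fin 2) Zhat) ∈ G := one_mem G
        have : (1 : SL2hat) ∈ Subtype.val ⁻¹' O := by
          rw [hOpre]; exact h1mem
        exact this
      obtain ⟨S0, M, hM, hbasic⟩ := gl_nhds hOopen h1O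
      refine ⟨insert Ptwo (insert Pthree S0), M, hM, Finset.mem_insert_self _ _,
        Finset.mem_insert_of_mem (Finset.mem_insert_self _ _), fun x hxdet hc => ?_⟩
      have hxSL : x ∈ SL2hat := by
        show x ∈ (Matrix.GeneralLinearGroup.det : GL (Fin 2) Zhat →* Zhatˣ).ker
        rw [MonoidHom.mem_ker]
        ext
        rw [Matrix.GeneralLinearGroup.val_det_apply, hxdet, Units.val_one]
      have hxO : x ∈ O := hbasic x fun p hp i j =>
        hc p (Finset.mem_insert_of_mem (Finset.mem_insert_of_mem hp)) i j
      have : (⟨x, hxSL⟩ : SL2hat) ∈ Subtype.val ⁻¹' O := hxO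
      rw [hOpre] at this
      exact this
  obtain ⟨S, M, hM, h2, h3, hH⟩ := hext
  -- the target subgroup (as a subgroup of SL2hat)
  set C : Subgroup SL2hat :=
    Subgroup.comap SL2hat.subtype (⁅G, G⁆ : Subgroup (GL (Fin 2) Zhat)).topologicalClosure
    with hCdef
  have hgoal : {x : SL2hat |
      (x : GL (Fin 2) Zhat) ∈ (⁅G, G⁆ : Subgroup (GL (Fin 2) Zhat)).topologicalClosure}
      = (C : Set SL2hat) := rfl
  rw [hgoal]
  -- C is a neighborhood of 1
  apply Subgroup.isOpen_of_mem_nhds (g := (1 : SL2hat))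
  rw [mem_nhds_iff]
  -- the basic open congruence set in SL2hat
  refine ⟨⋂ (p : Nat.Primes) (_ : p ∈ S), ⋂ (i : Fin 2), ⋂ (j : Fin 2),
      {x : SL2hat | ((x : GL (Fin 2) Zhat)).val i j p ∈
        Metric.ball (((1 : Matrix (Fin 2) (Fin 2) Zhat)) i j p)
          (((p:ℕ):ℝ)^(-((6*M+6 : ℕ):ℤ)+1))}, ?_, ?_, ?_⟩
  · -- contained in C
    intro x hx
    simp only [Set.mem_iInter] at hx
    have hcong : ∀ p ∈ S, ∀ i j, ((p:ℕ):ℤ_[p])^(6*M+6) ∣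
        (((x : GL (Fin 2) Zhat)).val i j - (1 : Matrix (Fin 2) (Fin 2) Zhat) i j) p := by
      intro p hp i j
      have := hx p hp i j
      have hdvd := dvd_of_mem_ball' (M := 6*M+6) this
      rwa [Pi.sub_apply]
    have hdet : (((x : GL (Fin 2) Zhat)).val).det = 1 := det_val_of_mem_SL2hat x.2
    have hmem : (x : GL (Fin 2) Zhat) ∈ ⁅G, G⁆ :=
      main_mem G S M hM h2 h3 hH _ hdet hcong
    exact Subgroup.le_topologicalClosure _ hmem
  · -- open
    refine isOpen_biInter_finset fun p hp => isOpen_iInter_of_finite fun i =>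
      isOpen_iInter_of_finite fun j => ?_
    have c1 : Continuous fun x : SL2hat => (x : GL (Fin 2) Zhat) := continuous_subtype_val
    have c2 : Continuous fun u : GL (Fin 2) Zhat => (u.val : Matrix (Fin 2) (Fin 2) Zhat) :=
      Units.continuous_val
    have c3 : Continuous fun m : Matrix (Fin 2) (Fin 2) Zhat => m i j p :=
      (continuous_apply p).comp ((continuous_apply j).comp (continuous_apply i))
    exact ((c3.comp c2).comp c1).isOpen_preimage _ Metric.isOpen_ball
  · -- contains 1
    simp only [Set.mem_iInter]
    intro p hp i j
    apply Metric.mem_ball_self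
    have hp0 : (0:ℝ) < ((p:ℕ):ℝ) := by exact_mod_cast p.2.pos
    exact zpow_pos hp0 _
end

section
/- Let 𝒢 be a subgroup of GL₂(ẑ) containing G_E := ρ_E^*(Gal_ℚ) as a normal subgroup with 𝒢/G_E abelian, where E is a non-CM elliptic curve over ℚ. Then [𝒢,𝒢] = [G_E,G_E]. (Group-theoretic version: if G ⊆ 𝒢 ⊆ GL₂(ẑ) with G normal in 𝒢, 𝒢/G abelian, and G ∩ SL₂(ẑ) = [G,G], then [𝒢,𝒢] = [G,G].) -/
open Matrix

/-- group-theoretic version. If `G ⊆ 𝒢 ⊆ GL₂(ẑ)` with `G` normal in `𝒢`,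
`𝒢/G` abelian (every commutator of elements of `𝒢` lies in `G`), and
`G ∩ SL₂(ẑ) = [G,G]` (closed commutator subgroup), then `[𝒢,𝒢] = [G,G]`. -/
theorem commutator_eq_of_abelian_quotient
    (G 𝒢 : Subgroup (GL (Fin 2) Zhat)) (hsub : G ≤ 𝒢)
    (hnorm : ∀ g ∈ 𝒢, ∀ x ∈ G, g * x * g⁻¹ ∈ G)
    (habel : ∀ a ∈ 𝒢, ∀ b ∈ 𝒢, a * b * a⁻¹ * b⁻¹ ∈ G)
    (hKW : G ⊓ SL2hat = (⁅G, G⁆ : Subgroup (GL (Fin 2) Zhat)).topologicalClosure) :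
    (⁅𝒢, 𝒢⁆ : Subgroup (GL (Fin 2) Zhat)).topologicalClosure
      = (⁅G, G⁆ : Subgroup (GL (Fin 2) Zhat)).topologicalClosure := by
  apply le_antisymm
  · apply Subgroup.topologicalClosure_minimal _ _
      (Subgroup.isClosed_topologicalClosure _)
    rw [← hKW]
    rw [Subgroup.commutator_le]
    intro g hg h hh
    refine ⟨habel g hg h hh, ?_⟩
    show Matrix.GeneralLinearGroup.det (g * h * g⁻¹ * h⁻¹) = 1
    simp [mul_comm]
  · exact Subgroup.topologicalClosure_minimal _
      ((Subgroup.commutator_mono hsub hsub).trans (Subgroup.le_topologicalClosure _))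
      (Subgroup.isClosed_topologicalClosure _)
end
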